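/- arXiv:2101.03015 — 12 statements merged into one kernel-verified Lean document; each statement's English description precedes it below -/
import Mathlib

section
/- If F is a nonempty family of k-element subsets of [n] with 0 < j < k, then the j-th shadow ∂^j F (the family of (k−j)-subsets contained in some member of F) satisfies |∂^j F| / |F| ≥ C(n, k−j) / C(n, k). -/
open Finset FinsetFamily

lemma iterLYM {α : Type} [Fintype α] [DecidableEq α] (𝒜 : Finset (Finset α)) (k : ℕ) :
    ∀ j ≤ k, (𝒜 : Set (Finset α)).Sized k →
    (𝒜.card : ℚ) / (Fintype.card α).choose k ≤ ((∂^[j] 𝒜).card : ℚ) / (Fintype.card α).choose (k - j) := by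
  intro j
  induction j with
  | zero => intro _ _; simp
  | succ j ih =>
    intro hjk hs
    have hj : j ≤ k := Nat.le_of_succ_le hjk
    refine (ih hj hs).trans ?_
    have hsj : ((∂^[j] 𝒜 : Finset (Finset α)) : Set (Finset α)).Sized (k - j) :=
      hs.shadow_iterate
    have hne : k - j ≠ 0 := Nat.sub_ne_zero_of_lt hjk
    have := Finset.card_div_choose_le_card_shadow_div_choose (𝕜 := ℚ) hne hsj
    rw [Function.iterate_succ_apply']
    exact this

theorem sperner_shadow_bound (n k j : ℕ) (𝓕 : Finset (Finset ℕ))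
    (h𝓕 : 𝓕.Nonempty)
    (hsub : ∀ F ∈ 𝓕, F ⊆ Finset.Icc 1 n)
    (hcard : ∀ F ∈ 𝓕, F.card = k)
    (hj0 : 0 < j) (hjk : j < k) :
    ((((Finset.Icc 1 n).powersetCard (k - j)).filter
        (fun G => ∃ F ∈ 𝓕, G ⊆ F)).card : ℚ) / (𝓕.card : ℚ) ≥
      (n.choose (k - j) : ℚ) / (n.choose k : ℚ) := by
  classical
  set e : Fin n → ℕ := fun i => (i : ℕ) + 1 with he_def
  have he : Function.Injective e := by
    intro a b h
    simp only [e] at h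
    exact Fin.ext (by omega)
  set P : Finset ℕ → Finset (Fin n) := fun F => F.preimage e he.injOn with hP_def
  have hPg : ∀ F : Finset ℕ, F ⊆ Finset.Icc 1 n → (P F).image e = F := by
    intro F hF
    ext y
    simp only [P, Finset.mem_image, Finset.mem_preimage]
    constructor
    · rintro ⟨x, hx, rfl⟩; exact hx
    · intro hy
      have := hF hy
      rw [Finset.mem_Icc] at this
      exact ⟨⟨y - 1, by omega⟩, by simpa [e] using (by omega : y - 1 + 1 = y) ▸ (by simpa [e, (by omega : y - 1 + 1 = y)] using hy), by simp [e]; omega⟩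
  set 𝒜 : Finset (Finset (Fin n)) := 𝓕.image P with h𝒜_def
  have hcard𝒜 : 𝒜.card = 𝓕.card := by
    apply Finset.card_image_of_injOn
    intro F1 h1 F2 h2 hP
    have := hPg F1 (hsub F1 h1)
    rw [hP, hPg F2 (hsub F2 h2)] at this
    exact this.symm
  have hsized : ((𝒜 : Finset (Finset (Fin n))) : Set (Finset (Fin n))).Sized k := by
    intro A hA
    simp only [h𝒜_def, Finset.coe_image, Set.mem_image, Finset.mem_coe] at hA
    obtain ⟨F, hF, rfl⟩ := hA
    have h1 : ((P F).image e).card = (P F).card := Finset.card_image_of_injective _ he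
    rw [hPg F (hsub F hF)] at h1
    rw [← h1]; exact hcard F hF
  have hkn : k ≤ n := by
    obtain ⟨F₀, hF₀⟩ := h𝓕
    calc k = F₀.card := (hcard F₀ hF₀).symm
    _ ≤ (Finset.Icc 1 n).card := Finset.card_le_card (hsub F₀ hF₀)
    _ = n := by rw [Nat.card_Icc]; omega
  -- the filter set equals the image of the iterated shadow
  have hS : ((Finset.Icc 1 n).powersetCard (k - j)).filter (fun G => ∃ F ∈ 𝓕, G ⊆ F)
      = (∂^[j] 𝒜).image (fun A => A.image e) := by
    ext G
    simp only [Finset.mem_filter, Finset.mem_powersetCard, Finset.mem_image]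
    constructor
    · rintro ⟨⟨hGsub, hGcard⟩, F, hF, hGF⟩
      refine ⟨P G, ?_, hPg G hGsub⟩
      rw [Finset.mem_shadow_iterate_iff_exists_sdiff]
      refine ⟨P F, Finset.mem_image_of_mem P hF, ?_, ?_⟩
      · intro x hx
        simp only [P, Finset.mem_preimage] at hx ⊢
        exact hGF hx
      · have hTA : P G ⊆ P F := by
          intro x hx
          simp only [P, Finset.mem_preimage] at hx ⊢
          exact hGF hx
        rw [Finset.card_sdiff_of_subset hTA]
        have e1 : (P G).card = k - j := by
          have := Finset.card_image_of_injective (P G) he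
          rw [hPg G hGsub] at this; omega
        have e2 : (P F).card = k := by
          have := Finset.card_image_of_injective (P F) he
          rw [hPg F (hsub F hF)] at this
          rw [← hcard F hF]; omega
        omega
    · rintro ⟨T, hT, rfl⟩
      rw [Finset.mem_shadow_iterate_iff_exists_sdiff] at hT
      obtain ⟨A, hA, hTA, hAT⟩ := hT
      simp only [h𝒜_def, Finset.mem_image] at hA
      obtain ⟨F, hF, rfl⟩ := hA
      have hAk : (P F).card = k := by
        have := Finset.card_image_of_injective (P F) he
        rw [hPg F (hsub F hF)] at this
        rw [← hcard F hF]; omega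
      have hTcard : T.card = k - j := by
        rw [Finset.card_sdiff_of_subset hTA] at hAT; omega
      have hsubF : T.image e ⊆ F := by
        rw [← hPg F (hsub F hF)]
        exact Finset.image_subset_image hTA
      refine ⟨⟨hsubF.trans (hsub F hF), ?_⟩, F, hF, hsubF⟩
      rw [Finset.card_image_of_injective _ he]; exact hTcard
  have hScard : (((Finset.Icc 1 n).powersetCard (k - j)).filter
      (fun G => ∃ F ∈ 𝓕, G ⊆ F)).card = (∂^[j] 𝒜).card := by
    rw [hS]
    exact Finset.card_image_of_injective _ (Finset.image_injective he)
  have key := iterLYM 𝒜 k j hjk.le hsized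
  rw [Fintype.card_fin, hcard𝒜] at key
  have h1 : (0:ℚ) < n.choose k := by exact_mod_cast Nat.choose_pos hkn
  have h2 : (0:ℚ) < n.choose (k - j) := by exact_mod_cast Nat.choose_pos (by omega : k - j ≤ n)
  have h3 : (0:ℚ) < 𝓕.card := by exact_mod_cast Finset.card_pos.mpr h𝓕
  rw [ge_iff_le, div_le_div_iff₀ h1 h3]
  rw [div_le_div_iff₀ h1 h2] at key
  rw [hScard]
  nlinarith [key]
end

section
/- If F is a nonempty t-intersecting family of k-element subsets of [n] (meaning |F ∩ F'| ≥ t for all F, F' ∈ F), and k − t ≤ ℓ < k, then |σ_ℓ(F)| / |F| ≥ C(2k−t, ℓ) / C(2k−t, k), where σ_ℓ(F) is the family of all ℓ-subsets contained in some member of F. -/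
open Finset

namespace KatonaAux

/-- the `ℓ`-th shadow: all `ℓ`-element subsets of members of `𝓕`. -/
def shad (ℓ : ℕ) (𝓕 : Finset (Finset ℕ)) : Finset (Finset ℕ) :=
  𝓕.biUnion fun F => F.powersetCard ℓ

lemma mem_shad {ℓ : ℕ} {𝓕 : Finset (Finset ℕ)} {G : Finset ℕ} :
    G ∈ shad ℓ 𝓕 ↔ ∃ F ∈ 𝓕, G ⊆ F ∧ G.card = ℓ := by
  simp [shad, mem_powersetCard]

lemma fact_helper (a b : ℕ) (d : ℕ) (h : b ≤ a) :
    a.factorial * (b + d).factorial ≤ (a + d).factorial * b.factorial := by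
  induction d with
  | zero => simp [Nat.mul_comm]
  | succ d ih =>
      have h1 : a + (d+1) = (a+d)+1 := rfl
      have h2 : b + (d+1) = (b+d)+1 := rfl
      rw [h1, h2, Nat.factorial_succ, Nat.factorial_succ]
      calc a.factorial * ((b+d+1) * (b+d).factorial)
          = (b+d+1) * (a.factorial * (b+d).factorial) := by ring
        _ ≤ (a+d+1) * ((a+d).factorial * b.factorial) :=
            Nat.mul_le_mul (by omega) ih
        _ = (a+d+1) * (a+d).factorial * b.factorial := by ring

/-- `C(n,ℓ)/C(n,k)` is at least `C(m,ℓ)/C(m,k)` for `n ≤ m`, in multiplied form. -/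
lemma choose_ratio_mono {ℓ k n m : ℕ} (hℓk : ℓ ≤ k) (hkn : k ≤ n) (hnm : n ≤ m) :
    m.choose ℓ * n.choose k ≤ n.choose ℓ * m.choose k := by
  have hℓn : ℓ ≤ n := hℓk.trans hkn
  have hkm : k ≤ m := hkn.trans hnm
  have hℓm : ℓ ≤ m := hℓn.trans hnm
  have key : (m-k).factorial * (n-ℓ).factorial ≤ (m-ℓ).factorial * (n-k).factorial := by
    have e1 : m - ℓ = (m-k) + (k-ℓ) := by omega
    have e2 : n - ℓ = (n-k) + (k-ℓ) := by omega
    rw [e1, e2]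
    exact fact_helper _ _ _ (by omega)
  have E : 0 < ℓ.factorial * k.factorial * (m-ℓ).factorial * (n-k).factorial
      * (n-ℓ).factorial * (m-k).factorial := by positivity
  apply Nat.le_of_mul_le_mul_right _ E
  calc m.choose ℓ * n.choose k *
        (ℓ.factorial * k.factorial * (m-ℓ).factorial * (n-k).factorial
          * (n-ℓ).factorial * (m-k).factorial)
      = (m.choose ℓ * ℓ.factorial * (m-ℓ).factorial)
          * (n.choose k * k.factorial * (n-k).factorial)
          * ((n-ℓ).factorial * (m-k).factorial) := by ring
    _ = m.factorial * n.factorial * ((n-ℓ).factorial * (m-k).factorial) := by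
          rw [Nat.choose_mul_factorial_mul_factorial hℓm,
            Nat.choose_mul_factorial_mul_factorial hkn]
    _ ≤ m.factorial * n.factorial * ((m-ℓ).factorial * (n-k).factorial) := by
          apply Nat.mul_le_mul_left
          calc (n-ℓ).factorial * (m-k).factorial = (m-k).factorial * (n-ℓ).factorial := Nat.mul_comm _ _
            _ ≤ (m-ℓ).factorial * (n-k).factorial := key
    _ = (n.choose ℓ * ℓ.factorial * (n-ℓ).factorial)
          * (m.choose k * k.factorial * (m-k).factorial)
          * ((m-ℓ).factorial * (n-k).factorial) := by
          rw [Nat.choose_mul_factorial_mul_factorial hℓn,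
            Nat.choose_mul_factorial_mul_factorial hkm]
          ring
    _ = n.choose ℓ * m.choose k *
        (ℓ.factorial * k.factorial * (m-ℓ).factorial * (n-k).factorial
          * (n-ℓ).factorial * (m-k).factorial) := by ring

/-- the key cross-level binomial inequality. -/
lemma cross_ineq {k t ℓ m : ℕ} (ht : 1 ≤ t) (htk : t + 1 ≤ k) (hl1 : k - t ≤ ℓ)
    (hl2 : ℓ ≤ k) (hm : m = 2*k - t) :
    m.choose ℓ * (m-2).choose (k-1) ≤ (m-2).choose (ℓ-1) * m.choose k := by
  have hℓ1 : 1 ≤ ℓ := by omega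
  have hkm : k ≤ m := by omega
  have hℓm : ℓ ≤ m := by omega
  have hk2 : k - 1 ≤ m - 2 := by omega
  have hl2' : ℓ - 1 ≤ m - 2 := by omega
  -- core numeric inequality
  have core : k * (m - k) ≤ ℓ * (m - ℓ) := by
    obtain ⟨b, s, r, hb, hk, hl, hsr⟩ :
        ∃ b s r, 1 ≤ b ∧ k = b + t ∧ ℓ = b + s ∧ s + r = t :=
      ⟨k - t, ℓ - (k - t), t - (ℓ - (k - t)), by omega, by omega, by omega, by omega⟩
    have h1 : m - k = b := by omega
    have h2 : m - ℓ = b + r := by omega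
    rw [h1, h2, hk, hl]
    nlinarith [Nat.zero_le (s*r)]
  have key : (ℓ-1).factorial * ((m-2)-(ℓ-1)).factorial * (k.factorial * (m-k).factorial)
      ≤ ℓ.factorial * (m-ℓ).factorial * ((k-1).factorial * ((m-2)-(k-1)).factorial) := by
    have e1 : (m-2)-(ℓ-1) = (m-ℓ)-1 := by omega
    have e2 : (m-2)-(k-1) = (m-k)-1 := by omega
    have e3 : ℓ.factorial = ℓ * (ℓ-1).factorial := by
      conv_lhs => rw [show ℓ = (ℓ-1)+1 by omega]
      rw [Nat.factorial_succ]; congr 1; omega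
    have e4 : (m-ℓ).factorial = (m-ℓ) * ((m-ℓ)-1).factorial := by
      conv_lhs => rw [show m-ℓ = ((m-ℓ)-1)+1 by omega]
      rw [Nat.factorial_succ]; congr 1; omega
    have e5 : k.factorial = k * (k-1).factorial := by
      conv_lhs => rw [show k = (k-1)+1 by omega]
      rw [Nat.factorial_succ]; congr 1; omega
    have e6 : (m-k).factorial = (m-k) * ((m-k)-1).factorial := by
      conv_lhs => rw [show m-k = ((m-k)-1)+1 by omega]
      rw [Nat.factorial_succ]; congr 1; omega
    rw [e1, e2, e3, e4, e5, e6]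
    calc (ℓ-1).factorial * ((m-ℓ)-1).factorial * (k * (k-1).factorial * ((m-k) * ((m-k)-1).factorial))
        = (k * (m-k)) * ((ℓ-1).factorial * ((m-ℓ)-1).factorial * ((k-1).factorial * ((m-k)-1).factorial)) := by ring
      _ ≤ (ℓ * (m-ℓ)) * ((ℓ-1).factorial * ((m-ℓ)-1).factorial * ((k-1).factorial * ((m-k)-1).factorial)) :=
          Nat.mul_le_mul_right _ core
      _ = ℓ * (ℓ-1).factorial * ((m-ℓ) * ((m-ℓ)-1).factorial) * ((k-1).factorial * ((m-k)-1).factorial) := by ring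
  have E : 0 < ℓ.factorial * (m-ℓ).factorial * (k-1).factorial * ((m-2)-(k-1)).factorial
      * (ℓ-1).factorial * ((m-2)-(ℓ-1)).factorial * k.factorial * (m-k).factorial := by positivity
  apply Nat.le_of_mul_le_mul_right _ E
  calc m.choose ℓ * (m-2).choose (k-1) *
        (ℓ.factorial * (m-ℓ).factorial * (k-1).factorial * ((m-2)-(k-1)).factorial
          * (ℓ-1).factorial * ((m-2)-(ℓ-1)).factorial * k.factorial * (m-k).factorial)
      = (m.choose ℓ * ℓ.factorial * (m-ℓ).factorial)
          * ((m-2).choose (k-1) * (k-1).factorial * ((m-2)-(k-1)).factorial)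
          * ((ℓ-1).factorial * ((m-2)-(ℓ-1)).factorial * (k.factorial * (m-k).factorial)) := by ring
    _ = m.factorial * (m-2).factorial
          * ((ℓ-1).factorial * ((m-2)-(ℓ-1)).factorial * (k.factorial * (m-k).factorial)) := by
          rw [Nat.choose_mul_factorial_mul_factorial hℓm,
            Nat.choose_mul_factorial_mul_factorial hk2]
    _ ≤ m.factorial * (m-2).factorial
          * (ℓ.factorial * (m-ℓ).factorial * ((k-1).factorial * ((m-2)-(k-1)).factorial)) :=
          Nat.mul_le_mul_left _ key
    _ = ((m-2).choose (ℓ-1) * (ℓ-1).factorial * ((m-2)-(ℓ-1)).factorial)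
          * (m.choose k * k.factorial * (m-k).factorial)
          * (ℓ.factorial * (m-ℓ).factorial * ((k-1).factorial * ((m-2)-(k-1)).factorial)) := by
          rw [Nat.choose_mul_factorial_mul_factorial hl2',
            Nat.choose_mul_factorial_mul_factorial hkm]
          ring
    _ = (m-2).choose (ℓ-1) * m.choose k *
        (ℓ.factorial * (m-ℓ).factorial * (k-1).factorial * ((m-2)-(k-1)).factorial
          * (ℓ-1).factorial * ((m-2)-(ℓ-1)).factorial * k.factorial * (m-k).factorial) := by ring

end KatonaAux
namespace KatonaAux

lemma shad_self {k : ℕ} {𝓕 : Finset (Finset ℕ)} (hk : ∀ F ∈ 𝓕, F.card = k) :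
    shad k 𝓕 = 𝓕 := by
  ext G
  rw [mem_shad]
  constructor
  · rintro ⟨F, hF, hGF, hGc⟩
    have : G = F := Finset.eq_of_subset_of_card_le hGF (by rw [hk F hF, hGc])
    rwa [this]
  · intro hG
    exact ⟨G, hG, Finset.Subset.refl _, hk G hG⟩

/-- the shadow one level down equals the shadow of the shadow family. -/
lemma shad_step {k j : ℕ} {𝓕 : Finset (Finset ℕ)} (hk : ∀ F ∈ 𝓕, F.card = k)
    (hj : j < k) : shad j 𝓕 = shad j (shad (j+1) 𝓕) := by
  ext G
  simp only [mem_shad]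
  constructor
  · rintro ⟨F, hF, hGF, hGc⟩
    obtain ⟨H, hGH, hHF, hHc⟩ :=
      Finset.exists_subsuperset_card_eq (n := j+1) hGF (by omega) (by rw [hk F hF]; omega)
    exact ⟨H, ⟨F, hF, hHF, hHc⟩, hGH, hGc⟩
  · rintro ⟨H, ⟨F, hF, hHF, hHc⟩, hGH, hGc⟩
    exact ⟨F, hF, hGH.trans hHF, hGc⟩

/-- one-step local LYM-type double counting over the ground set `Icc 1 n`. -/
lemma step_count {n j : ℕ} (B : Finset (Finset ℕ))
    (hB : ∀ H ∈ B, H ⊆ Finset.Icc 1 n ∧ H.card = j + 1) :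
    B.card * (j+1) ≤ (shad j B).card * (n - j) := by
  classical
  apply Finset.card_mul_le_card_mul (fun H G => G ⊆ H)
  · intro H hH
    have hsub : H.powersetCard j ⊆ (shad j B).bipartiteAbove (fun H G => G ⊆ H) H := by
      intro G hG
      rw [Finset.mem_powersetCard] at hG
      rw [Finset.mem_bipartiteAbove]
      exact ⟨mem_shad.2 ⟨H, hH, hG.1, hG.2⟩, hG.1⟩
    calc j + 1 = (H.powersetCard j).card := by
          rw [Finset.card_powersetCard, (hB H hH).2, Nat.choose_succ_self_right]
      _ ≤ _ := Finset.card_le_card hsub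
  · intro G hG
    obtain ⟨F₀, hF₀, hGF₀, hGc⟩ := mem_shad.1 hG
    have hGground : G ⊆ Finset.Icc 1 n := hGF₀.trans (hB F₀ hF₀).1
    have hsub : B.bipartiteBelow (fun H G => G ⊆ H) G ⊆
        (Finset.Icc 1 n \ G).image (fun x => insert x G) := by
      intro H hH
      rw [Finset.mem_bipartiteBelow] at hH
      obtain ⟨hHB, hGH⟩ := hH
      have hcard : (H \ G).card = 1 := by
        rw [Finset.card_sdiff_of_subset hGH, (hB H hHB).2, hGc]; omega
      obtain ⟨x, hx⟩ := Finset.card_eq_one.1 hcard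
      have hxH : x ∈ H ∧ x ∉ G := by
        have := hx ▸ Finset.mem_sdiff (s := H) (t := G) (a := x)
        simp at this; tauto
      refine Finset.mem_image.2 ⟨x, Finset.mem_sdiff.2 ⟨(hB H hHB).1 hxH.1, hxH.2⟩, ?_⟩
      apply Finset.eq_of_subset_of_card_le
      · intro y hy
        rcases Finset.mem_insert.1 hy with rfl | hy
        · exact hxH.1
        · exact hGH hy
      · rw [(hB H hHB).2, Finset.card_insert_of_notMem hxH.2, hGc]
    calc (B.bipartiteBelow (fun H G => G ⊆ H) G).card
        ≤ ((Finset.Icc 1 n \ G).image (fun x => insert x G)).card := Finset.card_le_card hsub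
      _ ≤ (Finset.Icc 1 n \ G).card := Finset.card_image_le
      _ = n - j := by rw [Finset.card_sdiff_of_subset hGground, Nat.card_Icc, hGc]; omega

lemma shad_ground {ℓ n : ℕ} {𝓕 : Finset (Finset ℕ)} (h : ∀ F ∈ 𝓕, F ⊆ Finset.Icc 1 n) :
    ∀ G ∈ shad ℓ 𝓕, G ⊆ Finset.Icc 1 n ∧ G.card = ℓ := by
  intro G hG
  obtain ⟨F, hF, hGF, hGc⟩ := mem_shad.1 hG
  exact ⟨hGF.trans (h F hF), hGc⟩

/-- iterated LYM inequality over ground set `[1, n]`. -/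
lemma lym {n k : ℕ} (𝓕 : Finset (Finset ℕ)) (hg : ∀ F ∈ 𝓕, F ⊆ Finset.Icc 1 n)
    (hk : ∀ F ∈ 𝓕, F.card = k) (hkn : k ≤ n) :
    ∀ d, d ≤ k → 𝓕.card * n.choose (k - d) ≤ (shad (k - d) 𝓕).card * n.choose k := by
  intro d
  induction d with
  | zero => intro _; simp [shad_self hk]
  | succ d ih =>
      intro hd
      have hd' : d ≤ k := by omega
      set j := k - (d+1) with hjdef
      have hj1 : j + 1 = k - d := by omega
      have hjk : j < k := by omega
      set B := shad (k - d) 𝓕 with hBdef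
      have hBfacts : ∀ H ∈ B, H ⊆ Finset.Icc 1 n ∧ H.card = j + 1 := by
        rw [hj1]; exact shad_ground hg
      have hstep : B.card * (j+1) ≤ (shad j B).card * (n - j) := step_count B hBfacts
      have hshad : shad j 𝓕 = shad j B := by
        rw [hBdef, ← hj1]; exact shad_step hk (by omega)
      have hIH := ih hd'
      -- combine:  𝓕.card * C(n, j) * (n - j) ≤ (shad j 𝓕).card * C(n,k) * (n - j)
      have hnj : 0 < n - j := by omega
      apply Nat.le_of_mul_le_mul_right _ hnj
      calc 𝓕.card * n.choose j * (n - j)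
          = 𝓕.card * (n.choose j * (n - j)) := by ring
        _ = 𝓕.card * (n.choose (j+1) * (j+1)) := by rw [← Nat.choose_succ_right_eq]
        _ = (𝓕.card * n.choose (j+1)) * (j+1) := by ring
        _ ≤ ((shad (j+1) 𝓕).card * n.choose k) * (j+1) := by
              apply Nat.mul_le_mul_right
              rw [hj1]; exact hIH
        _ = ((shad (k-d) 𝓕).card * (j+1)) * n.choose k := by rw [hj1]; ring
        _ ≤ ((shad j B).card * (n - j)) * n.choose k := Nat.mul_le_mul_right _ hstep
        _ = (shad j 𝓕).card * n.choose k * (n - j) := by rw [hshad]; ring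

end KatonaAux
namespace KatonaAux
open FinsetFamily

/-- replace `N` by `j` -/
def cmp (j N : ℕ) (F : Finset ℕ) : Finset ℕ := insert j (F.erase N)

def moved (j N : ℕ) (𝓕 : Finset (Finset ℕ)) : Finset (Finset ℕ) :=
  𝓕.filter fun F => N ∈ F ∧ j ∉ F ∧ cmp j N F ∉ 𝓕

lemma compress_eq_cmp {j N : ℕ} (hjN : j ≠ N) {F : Finset ℕ} (hN : N ∈ F) (hj : j ∉ F) :
    UV.compress {j} {N} F = cmp j N F := by
  rw [UV.compress,
    if_pos ⟨Finset.disjoint_singleton_left.2 hj, Finset.singleton_subset_iff.2 hN⟩]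
  ext x
  simp only [cmp, sup_eq_union, Finset.mem_sdiff, Finset.mem_union, Finset.mem_insert,
    Finset.mem_erase, Finset.mem_singleton]
  constructor
  · rintro ⟨hx | rfl, hxN⟩
    · exact Or.inr ⟨hxN, hx⟩
    · exact Or.inl rfl
  · rintro (rfl | ⟨hxN, hxF⟩)
    · exact ⟨Or.inr rfl, hjN⟩
    · exact ⟨Or.inl hxF, hxN⟩

lemma compress_eq_self {j N : ℕ} {F : Finset ℕ} (h : ¬(N ∈ F ∧ j ∉ F)) :
    UV.compress {j} {N} F = F := by
  rw [UV.compress, if_neg]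
  rw [Finset.disjoint_singleton_left]
  intro hc
  exact h ⟨Finset.singleton_subset_iff.1 hc.2, hc.1⟩

lemma comp_eq {j N : ℕ} (hjN : j ≠ N) (𝓕 : Finset (Finset ℕ)) :
    UV.compression {j} {N} 𝓕 = (𝓕 \ moved j N 𝓕) ∪ (moved j N 𝓕).image (cmp j N) := by
  ext A
  rw [UV.mem_compression, Finset.mem_union, Finset.mem_sdiff, Finset.mem_image]
  constructor
  · rintro (⟨hA, hcA⟩ | ⟨hA, b, hb, rfl⟩)
    · left
      refine ⟨hA, ?_⟩
      rw [moved, Finset.mem_filter]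
      rintro ⟨-, hN, hj, hc⟩
      rw [compress_eq_cmp hjN hN hj] at hcA
      exact hc hcA
    · by_cases hmov : N ∈ b ∧ j ∉ b
      · rw [compress_eq_cmp hjN hmov.1 hmov.2] at hA ⊢
        exact Or.inr ⟨b, Finset.mem_filter.2 ⟨hb, hmov.1, hmov.2, hA⟩, rfl⟩
      · rw [compress_eq_self hmov] at hA
        exact absurd hb hA
  · rintro (⟨hA, hnm⟩ | ⟨b, hb, rfl⟩)
    · left
      refine ⟨hA, ?_⟩
      by_cases hmov : N ∈ A ∧ j ∉ A
      · rw [compress_eq_cmp hjN hmov.1 hmov.2]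
        by_contra hc
        exact hnm (Finset.mem_filter.2 ⟨hA, hmov.1, hmov.2, hc⟩)
      · rwa [compress_eq_self hmov]
    · rw [moved, Finset.mem_filter] at hb
      exact Or.inr ⟨hb.2.2.2, b, hb.1, compress_eq_cmp hjN hb.2.1 hb.2.2.1⟩

lemma not_mem_cmp {j N : ℕ} (hjN : j ≠ N) (F : Finset ℕ) : N ∉ cmp j N F := by
  simp [cmp, Ne.symm hjN]

lemma cmp_card {j N : ℕ} {F : Finset ℕ} (hN : N ∈ F) (hj : j ∉ F) :
    (cmp j N F).card = F.card := by
  have h1 : j ∉ F.erase N := fun h => hj (Finset.mem_of_mem_erase h)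
  rw [cmp, Finset.card_insert_of_notMem h1, Finset.card_erase_of_mem hN]
  have : 0 < F.card := Finset.card_pos.2 ⟨N, hN⟩
  omega

lemma mem_comp_cases {j N : ℕ} (hjN : j ≠ N) {𝓕 : Finset (Finset ℕ)} {A : Finset ℕ}
    (hA : A ∈ UV.compression {j} {N} 𝓕) :
    A ∈ 𝓕 ∨ ∃ b ∈ 𝓕, N ∈ b ∧ j ∉ b ∧ cmp j N b ∉ 𝓕 ∧ A = cmp j N b := by
  rw [comp_eq hjN] at hA
  rcases Finset.mem_union.1 hA with h | h
  · exact Or.inl (Finset.mem_sdiff.1 h).1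
  · obtain ⟨b, hb, rfl⟩ := Finset.mem_image.1 h
    rw [moved, Finset.mem_filter] at hb
    exact Or.inr ⟨b, hb.1, hb.2.1, hb.2.2.1, hb.2.2.2, rfl⟩

lemma kept {j N : ℕ} (hjN : j ≠ N) {𝓕 : Finset (Finset ℕ)} {A : Finset ℕ}
    (hA𝓒 : A ∈ UV.compression {j} {N} 𝓕) (hA : A ∈ 𝓕) (hN : N ∈ A) (hj : j ∉ A) :
    cmp j N A ∈ 𝓕 := by
  rw [comp_eq hjN] at hA𝓒
  rcases Finset.mem_union.1 hA𝓒 with h | h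
  · have := (Finset.mem_sdiff.1 h).2
    rw [moved, Finset.mem_filter] at this
    by_contra hc
    exact this ⟨hA, hN, hj, hc⟩
  · obtain ⟨b, _, rfl⟩ := Finset.mem_image.1 h
    exact absurd hN (not_mem_cmp hjN b)

lemma key2 {j N t : ℕ} (hjN : j ≠ N) {𝓕 : Finset (Finset ℕ)}
    (h𝓘 : ∀ F ∈ 𝓕, ∀ F' ∈ 𝓕, t ≤ (F ∩ F').card)
    {A b : Finset ℕ} (hA : A ∈ 𝓕)
    (hkept : N ∈ A → j ∉ A → cmp j N A ∈ 𝓕)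
    (hb : b ∈ 𝓕) (hNb : N ∈ b) (hjb : j ∉ b) :
    t ≤ (A ∩ cmp j N b).card := by
  by_cases hjA : j ∈ A
  · have hsub : insert j ((A ∩ b).erase N) ⊆ A ∩ cmp j N b := by
      intro x hx
      rcases Finset.mem_insert.1 hx with rfl | hx
      · exact Finset.mem_inter.2 ⟨hjA, Finset.mem_insert_self _ _⟩
      · obtain ⟨hxN, hxAb⟩ := Finset.mem_erase.1 hx
        obtain ⟨hxA, hxb⟩ := Finset.mem_inter.1 hxAb
        exact Finset.mem_inter.2 ⟨hxA,
          Finset.mem_insert.2 (Or.inr (Finset.mem_erase.2 ⟨hxN, hxb⟩))⟩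
    have hjnotmem : j ∉ (A ∩ b).erase N := fun h =>
      hjb (Finset.mem_inter.1 (Finset.mem_of_mem_erase h)).2
    have hcard : t ≤ (insert j ((A ∩ b).erase N)).card := by
      rw [Finset.card_insert_of_notMem hjnotmem]
      have h1 : (A ∩ b).card - 1 ≤ ((A ∩ b).erase N).card := Finset.pred_card_le_card_erase
      have h2 : t ≤ (A ∩ b).card := h𝓘 A hA b hb
      omega
    exact hcard.trans (Finset.card_le_card hsub)
  by_cases hNA : N ∈ A
  · have hA' := hkept hNA hjA
    have h1 := h𝓘 (cmp j N A) hA' b hb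
    have he : cmp j N A ∩ b = (A ∩ b).erase N := by
      ext x
      simp only [cmp, Finset.mem_inter, Finset.mem_insert, Finset.mem_erase]
      constructor
      · rintro ⟨rfl | ⟨hxN, hxA⟩, hxb⟩
        · exact absurd hxb hjb
        · exact ⟨hxN, hxA, hxb⟩
      · rintro ⟨hxN, hxA, hxb⟩
        exact ⟨Or.inr ⟨hxN, hxA⟩, hxb⟩
    have he2 : A ∩ cmp j N b = (A ∩ b).erase N := by
      ext x
      simp only [cmp, Finset.mem_inter, Finset.mem_insert, Finset.mem_erase]
      constructor
      · rintro ⟨hxA, rfl | ⟨hxN, hxb⟩⟩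
        · exact absurd hxA hjA
        · exact ⟨hxN, hxA, hxb⟩
      · rintro ⟨hxN, hxA, hxb⟩
        exact ⟨hxA, Or.inr ⟨hxN, hxb⟩⟩
    rw [he2, ← he]
    exact h1
  · have hsub : A ∩ b ⊆ A ∩ cmp j N b := by
      intro x hx
      obtain ⟨hxA, hxb⟩ := Finset.mem_inter.1 hx
      have hxN : x ≠ N := fun h => hNA (h ▸ hxA)
      exact Finset.mem_inter.2 ⟨hxA,
        Finset.mem_insert.2 (Or.inr (Finset.mem_erase.2 ⟨hxN, hxb⟩))⟩
    exact (h𝓘 A hA b hb).trans (Finset.card_le_card hsub)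

lemma comp_intersecting {j N t : ℕ} (hjN : j ≠ N) {𝓕 : Finset (Finset ℕ)}
    (h𝓘 : ∀ F ∈ 𝓕, ∀ F' ∈ 𝓕, t ≤ (F ∩ F').card) :
    ∀ A ∈ UV.compression {j} {N} 𝓕, ∀ B ∈ UV.compression {j} {N} 𝓕, t ≤ (A ∩ B).card := by
  intro A hA B hB
  rcases mem_comp_cases hjN hA with hA' | ⟨a, ha, hNa, hja, hca, rfl⟩ <;>
    rcases mem_comp_cases hjN hB with hB' | ⟨b, hb, hNb, hjb, hcb, rfl⟩
  · exact h𝓘 A hA' B hB'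
  · exact key2 hjN h𝓘 hA' (kept hjN hA hA') hb hNb hjb
  · rw [Finset.inter_comm]
    exact key2 hjN h𝓘 hB' (kept hjN hB hB') ha hNa hja
  · have he : cmp j N a ∩ cmp j N b = insert j ((a ∩ b).erase N) := by
      ext x
      simp only [cmp, Finset.mem_inter, Finset.mem_insert, Finset.mem_erase]
      constructor
      · rintro ⟨rfl | ⟨hxN, hxa⟩, hx2⟩
        · exact Or.inl rfl
        · rcases hx2 with rfl | ⟨-, hxb⟩
          · exact Or.inl rfl
          · exact Or.inr ⟨hxN, hxa, hxb⟩
      · rintro (rfl | ⟨hxN, hxa, hxb⟩)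
        · exact ⟨Or.inl rfl, Or.inl rfl⟩
        · exact ⟨Or.inr ⟨hxN, hxa⟩, Or.inr ⟨hxN, hxb⟩⟩
    rw [he]
    have hjne : j ∉ (a ∩ b).erase N := fun h =>
      hja (Finset.mem_inter.1 (Finset.mem_of_mem_erase h)).1
    rw [Finset.card_insert_of_notMem hjne,
      Finset.card_erase_of_mem (Finset.mem_inter.2 ⟨hNa, hNb⟩)]
    have h2 : t ≤ (a ∩ b).card := h𝓘 a ha b hb
    have : 0 < (a ∩ b).card := Finset.card_pos.2 ⟨N, Finset.mem_inter.2 ⟨hNa, hNb⟩⟩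
    omega

lemma comp_sized {j N k : ℕ} (hjN : j ≠ N) {𝓕 : Finset (Finset ℕ)}
    (hk : ∀ F ∈ 𝓕, F.card = k) :
    ∀ A ∈ UV.compression {j} {N} 𝓕, A.card = k := by
  intro A hA
  rcases mem_comp_cases hjN hA with h | ⟨b, hb, hNb, hjb, -, rfl⟩
  · exact hk A h
  · rw [cmp_card hNb hjb]; exact hk b hb

lemma comp_ground {j N n : ℕ} (hjN : j ≠ N) (hj : j ∈ Finset.Icc 1 n)
    {𝓕 : Finset (Finset ℕ)} (hg : ∀ F ∈ 𝓕, F ⊆ Finset.Icc 1 n) :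
    ∀ A ∈ UV.compression {j} {N} 𝓕, A ⊆ Finset.Icc 1 n := by
  intro A hA
  rcases mem_comp_cases hjN hA with h | ⟨b, hb, hNb, hjb, -, rfl⟩
  · exact hg A h
  · intro x hx
    rcases Finset.mem_insert.1 hx with rfl | hx
    · exact hj
    · exact hg b hb (Finset.mem_of_mem_erase hx)

end KatonaAux
namespace KatonaAux
open FinsetFamily

lemma shad_pred {jj : ℕ} {B : Finset (Finset ℕ)} (hB : ∀ H ∈ B, H.card = jj + 1) :
    shad jj B = Finset.shadow B := by
  ext G
  rw [mem_shad, Finset.mem_shadow_iff]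
  constructor
  · rintro ⟨H, hH, hGH, hGc⟩
    have hcard : (H \ G).card = 1 := by
      rw [Finset.card_sdiff_of_subset hGH, hB H hH, hGc]; omega
    obtain ⟨x, hx⟩ := Finset.card_eq_one.1 hcard
    have hxH : x ∈ H ∧ x ∉ G := by
      have h' : x ∈ H \ G := hx ▸ Finset.mem_singleton_self x
      exact ⟨(Finset.mem_sdiff.1 h').1, (Finset.mem_sdiff.1 h').2⟩
    refine ⟨H, hH, x, hxH.1, ?_⟩
    apply Finset.eq_of_subset_of_card_le
    · intro y hy
      rcases Finset.mem_erase.1 hy with ⟨hyx, hyH⟩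
      by_contra hyG
      have : y ∈ H \ G := Finset.mem_sdiff.2 ⟨hyH, hyG⟩
      rw [hx, Finset.mem_singleton] at this
      exact hyx this
    · rw [Finset.card_erase_of_mem hxH.1, hB H hH, hGc]
      omega
  · rintro ⟨H, hH, x, hxH, rfl⟩
    exact ⟨H, hH, Finset.erase_subset _ _, by rw [Finset.card_erase_of_mem hxH, hB H hH]; omega⟩

lemma shad_iter {k : ℕ} :
    ∀ d, d ≤ k → ∀ 𝓕 : Finset (Finset ℕ), (∀ F ∈ 𝓕, F.card = k) →
      shad (k - d) 𝓕 = (Finset.shadow)^[d] 𝓕 := by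
  intro d
  induction d with
  | zero => intro _ 𝓕 hk; simpa using shad_self hk
  | succ d ih =>
      intro hd 𝓕 hk
      rw [Function.iterate_succ_apply', ← ih (by omega) 𝓕 hk]
      have h1 : shad (k - (d+1)) 𝓕 = shad (k - (d+1)) (shad (k - (d+1) + 1) 𝓕) :=
        shad_step hk (by omega)
      have h2 : k - (d+1) + 1 = k - d := by omega
      rw [h1, h2]
      exact shad_pred (fun H hH => by
        have := (mem_shad.1 hH).choose_spec.2.2
        rw [h2]; exact this)

lemma iter_shadow_subset (j N : ℕ) (i : ℕ) :
    ∀ s : Finset (Finset ℕ),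
      (Finset.shadow)^[i] (UV.compression {j} {N} s) ⊆
        UV.compression {j} {N} ((Finset.shadow)^[i] s) := by
  induction i with
  | zero => intro s; exact Finset.Subset.refl _
  | succ i ih =>
      intro s
      rw [Function.iterate_succ_apply, Function.iterate_succ_apply]
      have hstep : Finset.shadow (UV.compression {j} {N} s) ⊆
          UV.compression {j} {N} (Finset.shadow s) := by
        apply UV.shadow_compression_subset_compression_shadow
        intro x hx
        refine ⟨N, Finset.mem_singleton_self N, ?_⟩
        rw [Finset.mem_singleton] at hx
        subst hx
        rw [Finset.erase_singleton, Finset.erase_singleton]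
        exact UV.isCompressed_self _ _
      exact (Monotone.iterate Finset.shadow_monotone i hstep).trans
        (ih (Finset.shadow s))

lemma comp_shad_card {j N k ℓ : ℕ} (hjN : j ≠ N) {𝓕 : Finset (Finset ℕ)}
    (hk : ∀ F ∈ 𝓕, F.card = k) (hℓ : ℓ ≤ k) :
    (shad ℓ (UV.compression {j} {N} 𝓕)).card ≤ (shad ℓ 𝓕).card := by
  have hsz := comp_sized hjN hk
  have e1 : shad ℓ (UV.compression {j} {N} 𝓕) =
      (Finset.shadow)^[k - ℓ] (UV.compression {j} {N} 𝓕) := by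
    have := shad_iter (k := k) (k - ℓ) (by omega) _ hsz
    rwa [show k - (k - ℓ) = ℓ by omega] at this
  have e2 : shad ℓ 𝓕 = (Finset.shadow)^[k - ℓ] 𝓕 := by
    have := shad_iter (k := k) (k - ℓ) (by omega) _ hk
    rwa [show k - (k - ℓ) = ℓ by omega] at this
  rw [e1, e2]
  calc ((Finset.shadow)^[k-ℓ] (UV.compression {j} {N} 𝓕)).card
      ≤ (UV.compression {j} {N} ((Finset.shadow)^[k-ℓ] 𝓕)).card :=
        Finset.card_le_card (iter_shadow_subset j N _ 𝓕)
    _ = ((Finset.shadow)^[k-ℓ] 𝓕).card := UV.card_compression _ _ _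

lemma comp_sum_lt {j N : ℕ} (hjN : j < N) {𝓕 : Finset (Finset ℕ)}
    (hne : UV.compression {j} {N} 𝓕 ≠ 𝓕) :
    (∑ A ∈ UV.compression {j} {N} 𝓕, ∑ x ∈ A, x) < ∑ F ∈ 𝓕, ∑ x ∈ F, x := by
  have hjN' : j ≠ N := Nat.ne_of_lt hjN
  set T := moved j N 𝓕 with hT
  have hTsub : T ⊆ 𝓕 := Finset.filter_subset _ _
  have hTne : T.Nonempty := by
    rcases Finset.eq_empty_or_nonempty T with h | h
    · exfalso
      apply hne
      rw [comp_eq hjN', ← hT, h]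
      simp
    · exact h
  have hinj : Set.InjOn (cmp j N) T := by
    intro a ha b hb hab
    simp only [Finset.coe_filter, Set.mem_setOf_eq, hT, moved] at ha hb
    have h1 : ∀ c : Finset ℕ, N ∈ c → j ∉ c → insert N ((cmp j N c).erase j) = c := by
      intro c hNc hjc
      rw [cmp, Finset.erase_insert (fun h => hjc (Finset.mem_of_mem_erase h)),
        Finset.insert_erase hNc]
    calc a = insert N ((cmp j N a).erase j) := (h1 a ha.2.1 ha.2.2.1).symm
      _ = insert N ((cmp j N b).erase j) := by rw [hab]
      _ = b := h1 b hb.2.1 hb.2.2.1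
  have hdisj : Disjoint (𝓕 \ T) (T.image (cmp j N)) := by
    rw [Finset.disjoint_right]
    intro A hA
    obtain ⟨b, hb, rfl⟩ := Finset.mem_image.1 hA
    rw [hT, moved, Finset.mem_filter] at hb
    intro hA'
    exact hb.2.2.2 (Finset.mem_sdiff.1 hA').1
  rw [comp_eq hjN', ← hT, Finset.sum_union hdisj,
    Finset.sum_image (fun a ha b hb => hinj ha hb)]
  have hlt : ∑ b ∈ T, (∑ x ∈ cmp j N b, x) < ∑ b ∈ T, ∑ x ∈ b, x := by
    apply Finset.sum_lt_sum_of_nonempty hTne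
    intro b hb
    rw [hT, moved, Finset.mem_filter] at hb
    obtain ⟨-, hNb, hjb, -⟩ := hb
    have h1 : j ∉ b.erase N := fun h => hjb (Finset.mem_of_mem_erase h)
    rw [cmp, Finset.sum_insert h1]
    have h2 : N + ∑ x ∈ b.erase N, x = ∑ x ∈ b, x := Finset.add_sum_erase b (fun x => x) hNb
    omega
  have hsplit : ∑ F ∈ 𝓕 \ T, (∑ x ∈ F, x) + ∑ b ∈ T, (∑ x ∈ b, x) = ∑ F ∈ 𝓕, ∑ x ∈ F, x :=
    Finset.sum_sdiff hTsub
  omega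

end KatonaAux
namespace KatonaAux
open FinsetFamily

lemma katona_main :
    ∀ M : ℕ, ∀ n k t ℓ : ℕ, ∀ 𝓕 : Finset (Finset ℕ),
      n + (∑ F ∈ 𝓕, ∑ x ∈ F, x) ≤ M →
      1 ≤ t → t ≤ k → k - t ≤ ℓ → ℓ ≤ k →
      (∀ F ∈ 𝓕, F ⊆ Finset.Icc 1 n) →
      (∀ F ∈ 𝓕, F.card = k) →
      (∀ F ∈ 𝓕, ∀ F' ∈ 𝓕, t ≤ (F ∩ F').card) →
      𝓕.card * (2*k - t).choose ℓ ≤ (shad ℓ 𝓕).card * (2*k - t).choose k := by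
  intro M
  induction M using Nat.strong_induction_on with
  | _ M IH =>
  intro n k t ℓ 𝓕 hM ht htk hl1 hl2 hg hk h𝓘
  rcases Finset.eq_empty_or_nonempty 𝓕 with rfl | hne
  · simp [shad]
  obtain ⟨Fw, hFw⟩ := hne
  have hkn : k ≤ n := by
    have h1 := Finset.card_le_card (hg Fw hFw)
    rw [hk Fw hFw, Nat.card_Icc] at h1; omega
  have hkm : k ≤ 2*k - t := by omega
  by_cases hcard1 : 𝓕.card = 1
  · obtain ⟨F, rfl⟩ := Finset.card_eq_one.1 hcard1
    have hsh : shad ℓ {F} = F.powersetCard ℓ := by simp [shad]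
    rw [hsh, Finset.card_powersetCard, hk F (Finset.mem_singleton_self F),
      Finset.card_singleton, one_mul]
    have := choose_ratio_mono hl2 (le_refl k) hkm
    simpa using this
  have hcard2 : 2 ≤ 𝓕.card := by
    have : 0 < 𝓕.card := Finset.card_pos.2 ⟨Fw, hFw⟩
    omega
  have htk' : t + 1 ≤ k := by
    obtain ⟨F, hF, F', hF', hFF'⟩ := Finset.one_lt_card.1 hcard2
    have h1 : t ≤ (F ∩ F').card := h𝓘 F hF F' hF'
    have hsub : F ∩ F' ⊆ F := Finset.inter_subset_left
    have hle : (F ∩ F').card ≤ k := by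
      rw [← hk F hF]; exact Finset.card_le_card hsub
    rcases Nat.lt_or_ge (F ∩ F').card k with h | h
    · omega
    · exfalso
      have he : F ∩ F' = F := Finset.eq_of_subset_of_card_le hsub (by rw [hk F hF]; omega)
      have hFsub : F ⊆ F' := fun x hx => by
        have : x ∈ F ∩ F' := he.symm ▸ hx
        exact (Finset.mem_inter.1 this).2
      exact hFF' (Finset.eq_of_subset_of_card_le hFsub
        (by rw [hk F hF, hk F' hF']))
  by_cases hbase : n ≤ 2*k - t
  · have hlym := lym 𝓕 hg hk hkn (k - ℓ) (by omega)
    rw [show k - (k - ℓ) = ℓ by omega] at hlym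
    have hmono := choose_ratio_mono hl2 hkn hbase
    have hnk0 : 0 < n.choose k := Nat.choose_pos hkn
    apply Nat.le_of_mul_le_mul_right _ hnk0
    calc 𝓕.card * (2*k-t).choose ℓ * n.choose k
        = 𝓕.card * ((2*k-t).choose ℓ * n.choose k) := by ring
      _ ≤ 𝓕.card * (n.choose ℓ * (2*k-t).choose k) := Nat.mul_le_mul_left _ hmono
      _ = (𝓕.card * n.choose ℓ) * (2*k-t).choose k := by ring
      _ ≤ ((shad ℓ 𝓕).card * n.choose k) * (2*k-t).choose k := Nat.mul_le_mul_right _ hlym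
      _ = (shad ℓ 𝓕).card * (2*k-t).choose k * n.choose k := by ring
  push_neg at hbase
  by_cases hcomp : ∀ jj ∈ Finset.Icc 1 (n-1), UV.compression {jj} {n} 𝓕 = 𝓕
  · -- fully compressed : split by the element n
    have hswap : ∀ F ∈ 𝓕, n ∈ F → ∀ jj ∈ Finset.Icc 1 (n-1), jj ∉ F → cmp jj n F ∈ 𝓕 := by
      intro F hF hnF jj hjj hjF
      have hc := hcomp jj hjj
      have hjN : jj ≠ n := by rw [Finset.mem_Icc] at hjj; omega
      by_contra hcmem
      have hFmoved : F ∈ moved jj n 𝓕 := Finset.mem_filter.2 ⟨hF, hnF, hjF, hcmem⟩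
      have hmm : cmp jj n F ∈ UV.compression {jj} {n} 𝓕 := by
        rw [comp_eq hjN]
        exact Finset.mem_union_right _ (Finset.mem_image_of_mem _ hFmoved)
      rw [hc] at hmm
      exact hcmem hmm
    have hℓ1 : 1 ≤ ℓ := by omega
    set 𝓕₀ := 𝓕.filter (fun F => n ∉ F) with h𝓕₀
    set 𝓕₁ := (𝓕.filter (fun F => n ∈ F)).image (fun F => F.erase n) with h𝓕₁
    have hinj₁ : Set.InjOn (fun F : Finset ℕ => F.erase n) ↑(𝓕.filter (fun F => n ∈ F)) := by
      intro a ha b hb hab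
      simp only [Finset.coe_filter, Set.mem_setOf_eq] at ha hb
      rw [← Finset.insert_erase ha.2, ← Finset.insert_erase hb.2]
      simp only at hab
      rw [hab]
    have hcard₁ : 𝓕₁.card = (𝓕.filter (fun F => n ∈ F)).card :=
      Finset.card_image_of_injOn hinj₁
    have hcardsplit : 𝓕.card = 𝓕₀.card + 𝓕₁.card := by
      rw [hcard₁, h𝓕₀, add_comm]
      exact (Finset.card_filter_add_card_filter_not (fun F => n ∈ F)).symm
    have hg₀ : ∀ F ∈ 𝓕₀, F ⊆ Finset.Icc 1 (n-1) := by
      intro F hF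
      rw [h𝓕₀, Finset.mem_filter] at hF
      intro x hx
      have hx1 := hg F hF.1 hx
      rw [Finset.mem_Icc] at hx1 ⊢
      have : x ≠ n := fun h => hF.2 (h ▸ hx)
      omega
    have hk₀ : ∀ F ∈ 𝓕₀, F.card = k := fun F hF => hk F (Finset.filter_subset _ _ hF)
    have h𝓘₀ : ∀ F ∈ 𝓕₀, ∀ F' ∈ 𝓕₀, t ≤ (F ∩ F').card := fun F hF F' hF' =>
      h𝓘 F (Finset.filter_subset _ _ hF) F' (Finset.filter_subset _ _ hF')
    have hsum₀ : (∑ F ∈ 𝓕₀, ∑ x ∈ F, x) ≤ ∑ F ∈ 𝓕, ∑ x ∈ F, x :=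
      Finset.sum_le_sum_of_subset (Finset.filter_subset _ _)
    have hIH₀ := IH (n - 1 + ∑ F ∈ 𝓕₀, ∑ x ∈ F, x) (by omega) (n-1) k t ℓ 𝓕₀ (le_refl _)
      ht htk hl1 hl2 hg₀ hk₀ h𝓘₀
    have hmem₁ : ∀ B ∈ 𝓕₁, ∃ F ∈ 𝓕, n ∈ F ∧ B = F.erase n := by
      intro B hB
      obtain ⟨F, hF, rfl⟩ := Finset.mem_image.1 hB
      rw [Finset.mem_filter] at hF
      exact ⟨F, hF.1, hF.2, rfl⟩
    have hg₁ : ∀ B ∈ 𝓕₁, B ⊆ Finset.Icc 1 (n-1) := by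
      intro B hB
      obtain ⟨F, hF, hnF, rfl⟩ := hmem₁ B hB
      intro x hx
      have hxn : x ≠ n := Finset.ne_of_mem_erase hx
      have hx1 := hg F hF (Finset.mem_of_mem_erase hx)
      rw [Finset.mem_Icc] at hx1 ⊢
      omega
    have hk₁ : ∀ B ∈ 𝓕₁, B.card = k - 1 := by
      intro B hB
      obtain ⟨F, hF, hnF, rfl⟩ := hmem₁ B hB
      rw [Finset.card_erase_of_mem hnF, hk F hF]
    have h𝓘₁ : ∀ A ∈ 𝓕₁, ∀ B ∈ 𝓕₁, t ≤ (A ∩ B).card := by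
      intro A hA B hB
      obtain ⟨a, ha, hna, rfl⟩ := hmem₁ A hA
      obtain ⟨b, hb, hnb, rfl⟩ := hmem₁ B hB
      have hclaim : t + 1 ≤ (a ∩ b).card := by
        by_contra hcon
        push_neg at hcon
        have habt : (a ∩ b).card = t := by
          have := h𝓘 a ha b hb; omega
        have hcup : (a ∪ b).card = 2*k - t := by
          have h3 := Finset.card_union_add_card_inter a b
          rw [hk a ha, hk b hb, habt] at h3
          omega
        have hex : ((Finset.Icc 1 (n-1)) \ (a ∪ b)).Nonempty := by
          have hcup' : ((a ∪ b).erase n).card = 2*k - t - 1 := by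
            rw [Finset.card_erase_of_mem (Finset.mem_union_left _ hna), hcup]
          have heq : (Finset.Icc 1 (n-1)) \ (a ∪ b)
              = (Finset.Icc 1 (n-1)) \ ((a ∪ b).erase n) := by
            ext x
            simp only [Finset.mem_sdiff, Finset.mem_erase, Finset.mem_Icc]
            constructor
            · rintro ⟨hx1, hx2⟩
              exact ⟨hx1, fun h => hx2 h.2⟩
            · rintro ⟨hx1, hx2⟩
              refine ⟨hx1, fun h => hx2 ⟨?_, h⟩⟩
              omega
          rw [heq, ← Finset.card_pos]
          have hle := Finset.le_card_sdiff ((a ∪ b).erase n) (Finset.Icc 1 (n-1))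
          rw [Nat.card_Icc, hcup'] at hle
          omega
        obtain ⟨jj, hjj⟩ := hex
        rw [Finset.mem_sdiff] at hjj
        have hjja : jj ∉ a := fun h => hjj.2 (Finset.mem_union_left _ h)
        have hjjb : jj ∉ b := fun h => hjj.2 (Finset.mem_union_right _ h)
        have ha' := hswap a ha hna jj hjj.1 hjja
        have hint := h𝓘 (cmp jj n a) ha' b hb
        have he : cmp jj n a ∩ b = (a ∩ b).erase n := by
          ext x
          simp only [cmp, Finset.mem_inter, Finset.mem_insert, Finset.mem_erase]
          constructor
          · rintro ⟨rfl | ⟨hxn, hxa⟩, hxb⟩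
            · exact absurd hxb hjjb
            · exact ⟨hxn, hxa, hxb⟩
          · rintro ⟨hxn, hxa, hxb⟩
            exact ⟨Or.inr ⟨hxn, hxa⟩, hxb⟩
        rw [he, Finset.card_erase_of_mem (Finset.mem_inter.2 ⟨hna, hnb⟩), habt] at hint
        omega
      have he2 : a.erase n ∩ b.erase n = (a ∩ b).erase n := by
        ext x
        simp only [Finset.mem_inter, Finset.mem_erase]
        tauto
      rw [he2, Finset.card_erase_of_mem (Finset.mem_inter.2 ⟨hna, hnb⟩)]
      omega
    have hsum₁ : (∑ B ∈ 𝓕₁, ∑ x ∈ B, x) ≤ ∑ F ∈ 𝓕, ∑ x ∈ F, x := by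
      rw [h𝓕₁, Finset.sum_image (fun a ha b hb => hinj₁ ha hb)]
      calc ∑ F ∈ 𝓕.filter (fun F => n ∈ F), (∑ x ∈ F.erase n, x)
          ≤ ∑ F ∈ 𝓕.filter (fun F => n ∈ F), (∑ x ∈ F, x) :=
            Finset.sum_le_sum (fun F _ =>
              Finset.sum_le_sum_of_subset (Finset.erase_subset _ _))
        _ ≤ ∑ F ∈ 𝓕, ∑ x ∈ F, x := Finset.sum_le_sum_of_subset (Finset.filter_subset _ _)
    have hIH₁ := IH (n - 1 + ∑ B ∈ 𝓕₁, ∑ x ∈ B, x) (by omega) (n-1) (k-1) t (ℓ-1) 𝓕₁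
      (le_refl _) ht (by omega) (by omega) (by omega) hg₁ hk₁ h𝓘₁
    rw [show 2*(k-1) - t = 2*k - t - 2 by omega] at hIH₁
    have hshadsplit : (shad ℓ 𝓕₀).card + (shad (ℓ-1) 𝓕₁).card ≤ (shad ℓ 𝓕).card := by
      have hsub : shad ℓ 𝓕₀ ∪ (shad (ℓ-1) 𝓕₁).image (insert n) ⊆ shad ℓ 𝓕 := by
        intro G hG
        rcases Finset.mem_union.1 hG with hG | hG
        · obtain ⟨F, hF, hGF, hGc⟩ := mem_shad.1 hG
          exact mem_shad.2 ⟨F, Finset.filter_subset _ _ hF, hGF, hGc⟩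
        · obtain ⟨G', hG', rfl⟩ := Finset.mem_image.1 hG
          obtain ⟨B, hB, hGB, hGc⟩ := mem_shad.1 hG'
          obtain ⟨F, hF, hnF, rfl⟩ := hmem₁ B hB
          have hnG' : n ∉ G' := fun h => (Finset.ne_of_mem_erase (hGB h)) rfl
          refine mem_shad.2 ⟨F, hF, ?_, ?_⟩
          · intro x hx
            rcases Finset.mem_insert.1 hx with rfl | hx
            · exact hnF
            · exact Finset.mem_of_mem_erase (hGB hx)
          · rw [Finset.card_insert_of_notMem hnG', hGc]
            omega
      have hdisj : Disjoint (shad ℓ 𝓕₀) ((shad (ℓ-1) 𝓕₁).image (insert n)) := by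
        rw [Finset.disjoint_right]
        intro G hG hG0
        obtain ⟨G', hG', rfl⟩ := Finset.mem_image.1 hG
        obtain ⟨F, hF, hGF, -⟩ := mem_shad.1 hG0
        rw [h𝓕₀, Finset.mem_filter] at hF
        exact hF.2 (hGF (Finset.mem_insert_self _ _))
      have hinjins : Set.InjOn (fun G : Finset ℕ => insert n G) ↑(shad (ℓ-1) 𝓕₁) := by
        intro a ha' b hb' hab
        have hna : n ∉ a := by
          obtain ⟨B, hB, hGB, -⟩ := mem_shad.1 (Finset.mem_coe.1 ha')
          intro h
          have := hg₁ B hB (hGB h)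
          rw [Finset.mem_Icc] at this
          omega
        have hnb : n ∉ b := by
          obtain ⟨B, hB, hGB, -⟩ := mem_shad.1 (Finset.mem_coe.1 hb')
          intro h
          have := hg₁ B hB (hGB h)
          rw [Finset.mem_Icc] at this
          omega
        rw [← Finset.erase_insert hna, ← Finset.erase_insert hnb]
        simp only at hab
        rw [hab]
      calc (shad ℓ 𝓕₀).card + (shad (ℓ-1) 𝓕₁).card
          = (shad ℓ 𝓕₀).card + ((shad (ℓ-1) 𝓕₁).image (insert n)).card := by
            rw [Finset.card_image_of_injOn hinjins]
        _ = (shad ℓ 𝓕₀ ∪ (shad (ℓ-1) 𝓕₁).image (insert n)).card :=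
            (Finset.card_union_of_disjoint hdisj).symm
        _ ≤ (shad ℓ 𝓕).card := Finset.card_le_card hsub
    have hcross := cross_ineq ht htk' hl1 hl2 (rfl : 2*k-t = 2*k-t)
    have hstep₁ : 𝓕₁.card * (2*k-t).choose ℓ ≤ (shad (ℓ-1) 𝓕₁).card * (2*k-t).choose k := by
      have hpos : 0 < (2*k-t-2).choose (ℓ-1) := Nat.choose_pos (by omega)
      apply Nat.le_of_mul_le_mul_right _ hpos
      calc 𝓕₁.card * (2*k-t).choose ℓ * (2*k-t-2).choose (ℓ-1)
          = (𝓕₁.card * (2*k-t-2).choose (ℓ-1)) * (2*k-t).choose ℓ := by ring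
        _ ≤ ((shad (ℓ-1) 𝓕₁).card * (2*k-t-2).choose (k-1)) * (2*k-t).choose ℓ :=
            Nat.mul_le_mul_right _ hIH₁
        _ = (shad (ℓ-1) 𝓕₁).card * ((2*k-t).choose ℓ * (2*k-t-2).choose (k-1)) := by ring
        _ ≤ (shad (ℓ-1) 𝓕₁).card * ((2*k-t-2).choose (ℓ-1) * (2*k-t).choose k) :=
            Nat.mul_le_mul_left _ hcross
        _ = (shad (ℓ-1) 𝓕₁).card * (2*k-t).choose k * (2*k-t-2).choose (ℓ-1) := by ring
    calc 𝓕.card * (2*k-t).choose ℓ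
        = (𝓕₀.card + 𝓕₁.card) * (2*k-t).choose ℓ := by rw [← hcardsplit]
      _ = 𝓕₀.card * (2*k-t).choose ℓ + 𝓕₁.card * (2*k-t).choose ℓ := by ring
      _ ≤ (shad ℓ 𝓕₀).card * (2*k-t).choose k + (shad (ℓ-1) 𝓕₁).card * (2*k-t).choose k :=
          Nat.add_le_add hIH₀ hstep₁
      _ = ((shad ℓ 𝓕₀).card + (shad (ℓ-1) 𝓕₁).card) * (2*k-t).choose k := by ring
      _ ≤ (shad ℓ 𝓕).card * (2*k-t).choose k := Nat.mul_le_mul_right _ hshadsplit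
  · -- not fully compressed : compress
    push_neg at hcomp
    obtain ⟨jj, hjj, hneq⟩ := hcomp
    have hjjn : jj < n := by rw [Finset.mem_Icc] at hjj; omega
    have hjN : jj ≠ n := Nat.ne_of_lt hjjn
    have hsum : (∑ A ∈ UV.compression {jj} {n} 𝓕, ∑ x ∈ A, x) < ∑ F ∈ 𝓕, ∑ x ∈ F, x :=
      comp_sum_lt hjjn hneq
    have hIHc := IH (n + ∑ A ∈ UV.compression {jj} {n} 𝓕, ∑ x ∈ A, x) (by omega)
      n k t ℓ (UV.compression {jj} {n} 𝓕) (le_refl _) ht htk hl1 hl2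
      (comp_ground hjN (by rw [Finset.mem_Icc] at hjj ⊢; omega) hg)
      (comp_sized hjN hk) (comp_intersecting hjN h𝓘)
    rw [UV.card_compression] at hIHc
    exact hIHc.trans (Nat.mul_le_mul_right _ (comp_shad_card hjN hk hl2))

end KatonaAux
open Finset

theorem intersecting_shadow_theorem (n k t ℓ : ℕ) (𝓕 : Finset (Finset ℕ))
    (hnk : n > k) (hkt : k > t) (ht : t ≥ 1)
    (h𝓕 : 𝓕.Nonempty)
    (hsub : ∀ F ∈ 𝓕, F ⊆ Finset.Icc 1 n)
    (hcard : ∀ F ∈ 𝓕, F.card = k)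
    (hint : ∀ F ∈ 𝓕, ∀ F' ∈ 𝓕, t ≤ (F ∩ F').card)
    (hℓ1 : k - t ≤ ℓ) (hℓ2 : ℓ < k) :
    ((((Finset.Icc 1 n).powersetCard ℓ).filter
        (fun G => ∃ F ∈ 𝓕, G ⊆ F)).card : ℚ) / (𝓕.card : ℚ) ≥
      ((2 * k - t).choose ℓ : ℚ) / ((2 * k - t).choose k : ℚ) := by
  classical
  have heq : ((Finset.Icc 1 n).powersetCard ℓ).filter (fun G => ∃ F ∈ 𝓕, G ⊆ F)
      = KatonaAux.shad ℓ 𝓕 := by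
    ext G
    rw [Finset.mem_filter, Finset.mem_powersetCard, KatonaAux.mem_shad]
    constructor
    · rintro ⟨⟨hGsub, hGc⟩, F, hF, hGF⟩
      exact ⟨F, hF, hGF, hGc⟩
    · rintro ⟨F, hF, hGF, hGc⟩
      exact ⟨⟨hGF.trans (hsub F hF), hGc⟩, F, hF, hGF⟩
  have hmain := KatonaAux.katona_main (n + ∑ F ∈ 𝓕, ∑ x ∈ F, x) n k t ℓ 𝓕 (le_refl _)
    ht (by omega) hℓ1 (by omega) hsub hcard hint
  rw [heq, ge_iff_le, div_le_div_iff₀ (by exact_mod_cast Nat.choose_pos (by omega))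
    (by exact_mod_cast Finset.card_pos.2 h𝓕)]
  have : ((𝓕.card * (2*k - t).choose ℓ : ℕ) : ℚ)
      ≤ (((KatonaAux.shad ℓ 𝓕).card * (2*k - t).choose k : ℕ) : ℚ) := by
    exact_mod_cast hmain
  push_cast at this ⊢
  linarith
end

section
/- For integers 0 < j < t and 0 ≤ h < w, one has C(t+2h, t+h−j) / C(t+2h, t+h) > C(t+2w, t+w−j) / C(t+2w, t+w). -/
private lemma ratio_eq_prod (n k m : ℕ) (hm : m ≤ k) (hk : k ≤ n) :
    ((n.choose (k - m) : ℚ)) / (n.choose k : ℚ) =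
      ∏ i ∈ Finset.range m, ((k - i : ℕ) : ℚ) / ((n - k + i + 1 : ℕ) : ℚ) := by
  induction m with
  | zero => simp [div_self (show ((n.choose k : ℚ)) ≠ 0 from ne_of_gt (by exact_mod_cast Nat.choose_pos hk))]
  | succ m ih =>
    rw [Finset.prod_range_succ, ← ih (by omega)]
    have hc : (0:ℚ) < (n.choose k : ℚ) := by exact_mod_cast Nat.choose_pos hk
    have hy : (0:ℚ) < ((n - k + m + 1 : ℕ) : ℚ) := by exact_mod_cast Nat.succ_pos _
    have keyN : n.choose (k - m) * (k - m) = n.choose (k - (m+1)) * (n - k + m + 1) := by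
      have h := Nat.choose_succ_right_eq n (k - (m+1))
      rw [show k - (m+1) + 1 = k - m from by omega,
          show n - (k - (m+1)) = n - k + m + 1 from by omega] at h
      exact h
    have keyQ : (n.choose (k - m) : ℚ) * ((k - m : ℕ) : ℚ) =
        (n.choose (k - (m+1)) : ℚ) * ((n - k + m + 1 : ℕ) : ℚ) := by exact_mod_cast keyN
    rw [div_mul_div_comm, div_eq_div_iff (ne_of_gt hc) (ne_of_gt (mul_pos hc hy))]
    linear_combination (-(n.choose k : ℚ)) * keyQ

private lemma ratio_eq_prod' (t m j : ℕ) (hjt : j < t) :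
    ((t + 2 * m).choose (t + m - j) : ℚ) / ((t + 2 * m).choose (t + m) : ℚ) =
      ∏ i ∈ Finset.range j, ((t + m - i : ℕ) : ℚ) / ((m + j - i : ℕ) : ℚ) := by
  rw [ratio_eq_prod (t + 2 * m) (t + m) j (by omega) (by omega)]
  rw [Finset.prod_div_distrib, Finset.prod_div_distrib]
  congr 1
  rw [← Finset.prod_range_reflect (fun i => ((m + j - i : ℕ) : ℚ)) j]
  refine Finset.prod_congr rfl fun i hi => ?_
  rw [Finset.mem_range] at hi
  congr 1
  omega

theorem binom_ratio_mono_i (j t h w : ℕ)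
    (hj0 : 0 < j) (hjt : j < t) (hhw : h < w) :
    ((t + 2 * h).choose (t + h - j) : ℚ) / ((t + 2 * h).choose (t + h) : ℚ) >
      ((t + 2 * w).choose (t + w - j) : ℚ) / ((t + 2 * w).choose (t + w) : ℚ) := by
  rw [ratio_eq_prod' t h j hjt, ratio_eq_prod' t w j hjt]
  refine Finset.prod_lt_prod_of_nonempty ?_ ?_ ⟨0, Finset.mem_range.2 hj0⟩
  · intro i hi
    rw [Finset.mem_range] at hi
    apply div_pos
    · exact_mod_cast Nat.sub_pos_of_lt (by omega)
    · exact_mod_cast Nat.sub_pos_of_lt (by omega)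
  · intro i hi
    rw [Finset.mem_range] at hi
    rw [div_lt_div_iff₀ (by exact_mod_cast Nat.sub_pos_of_lt (by omega))
      (by exact_mod_cast Nat.sub_pos_of_lt (by omega))]
    have e1 : ((t + w - i : ℕ) : ℚ) = (t : ℚ) + w - i := by
      push_cast [Nat.cast_sub (show i ≤ t + w by omega)]; ring
    have e2 : ((t + h - i : ℕ) : ℚ) = (t : ℚ) + h - i := by
      push_cast [Nat.cast_sub (show i ≤ t + h by omega)]; ring
    have e3 : ((w + j - i : ℕ) : ℚ) = (w : ℚ) + j - i := by
      push_cast [Nat.cast_sub (show i ≤ w + j by omega)]; ring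
    have e4 : ((h + j - i : ℕ) : ℚ) = (h : ℚ) + j - i := by
      push_cast [Nat.cast_sub (show i ≤ h + j by omega)]; ring
    rw [e1, e2, e3, e4]
    have h1 : (j : ℚ) < t := by exact_mod_cast hjt
    have h2 : (h : ℚ) < w := by exact_mod_cast hhw
    nlinarith [mul_pos (sub_pos.2 h1) (sub_pos.2 h2)]
end

section
/- For integers 0 < j < t, w ≥ 1 and 1 ≤ r ≤ w, one has C(t+2w, t+w−j+r) / C(t+2w, t+w+r) > C(t+2w, t+w−j) / C(t+2w, t+w). -/
lemma choose_step_aux (n a b : ℕ) (hab : a < b) (hb : b + 1 ≤ n) :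
    n.choose a * n.choose (b+1) < n.choose (a+1) * n.choose b := by
  have hA := Nat.choose_succ_right_eq n a
  have hB := Nat.choose_succ_right_eq n b
  have hposA : 0 < n.choose a := Nat.choose_pos (by omega)
  have hposB : 0 < n.choose b := Nat.choose_pos (by omega)
  have key : (n - b) * (a + 1) < (n - a) * (b + 1) := by
    have h1 : n - b < n - a := by omega
    calc (n - b) * (a+1) < (n - a) * (a+1) :=
          Nat.mul_lt_mul_of_lt_of_le h1 (le_refl _) (by omega)
      _ ≤ (n - a) * (b+1) := Nat.mul_le_mul_left _ (by omega)
  have main : n.choose a * n.choose (b+1) * ((a+1)*(b+1)) <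
      n.choose (a+1) * n.choose b * ((a+1)*(b+1)) := by
    calc n.choose a * n.choose (b+1) * ((a+1)*(b+1))
        = n.choose a * (n.choose (b+1) * (b+1)) * (a+1) := by ring
      _ = n.choose a * (n.choose b * (n-b)) * (a+1) := by rw [hB]
      _ = n.choose a * n.choose b * ((n-b)*(a+1)) := by ring
      _ < n.choose a * n.choose b * ((n-a)*(b+1)) :=
          Nat.mul_lt_mul_of_le_of_lt (le_refl _) key (Nat.mul_pos hposA hposB)
      _ = (n.choose (a+1) * (a+1)) * n.choose b * (b+1) := by rw [hA]; ring
      _ = n.choose (a+1) * n.choose b * ((a+1)*(b+1)) := by ring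
  exact Nat.lt_of_mul_lt_mul_right main

lemma choose_chain_aux (n a b : ℕ) (hab : a < b) (hbn : b ≤ n) :
    ∀ r : ℕ, 1 ≤ r → b + r ≤ n →
    n.choose a * n.choose (b+r) < n.choose (a+r) * n.choose b := by
  intro r
  induction r with
  | zero => omega
  | succ r ih =>
    intro _ hbr
    rcases Nat.eq_zero_or_pos r with h0 | hpos
    · subst h0; simpa using choose_step_aux n a b hab (by omega)
    · have ih' := ih hpos (by omega)
      have hstep := choose_step_aux n (a+r) (b+r) (by omega) (by omega)
      have hposar : 0 < n.choose (a+r) := Nat.choose_pos (by omega)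
      have hposbr : 0 < n.choose (b+r) := Nat.choose_pos (by omega)
      have h1 : a + (r+1) = (a+r) + 1 := by ring
      have h2 : b + (r+1) = (b+r) + 1 := by ring
      rw [h1, h2]
      nlinarith [ih', hstep, hposar, hposbr,
        Nat.choose_pos (show a ≤ n by omega), Nat.choose_pos hbn]

theorem binom_ratio_mono_ii (j t w r : ℕ)
    (hj0 : 0 < j) (hjt : j < t) (hw : 1 ≤ w) (hr1 : 1 ≤ r) (hrw : r ≤ w) :
    ((t + 2 * w).choose (t + w - j + r) : ℚ) / ((t + 2 * w).choose (t + w + r) : ℚ) >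
      ((t + 2 * w).choose (t + w - j) : ℚ) / ((t + 2 * w).choose (t + w) : ℚ) := by
  set n := t + 2 * w with hn
  have hab : t + w - j < t + w := by omega
  have key := choose_chain_aux n (t + w - j) (t + w) hab (by omega) r hr1 (by omega)
  have hposb : (0:ℚ) < n.choose (t + w) := by
    exact_mod_cast Nat.choose_pos (show t + w ≤ n by omega)
  have hposbr : (0:ℚ) < n.choose (t + w + r) := by
    exact_mod_cast Nat.choose_pos (show t + w + r ≤ n by omega)
  rw [gt_iff_lt, div_lt_div_iff₀ hposb hposbr]
  exact_mod_cast key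
end

section
/- Suppose F and F' are finite subsets of [n] with heights h(F) < h(F') (with respect to parameters t, w), and let G, G' be (k−j)-subsets obtained from F, F' respectively by deleting j elements not belonging to the tails T(F) = F \ [t+2h(F)], T(F') = F' \ [t+2h(F')]. Then G ≠ G'; in particular the restricted j-th shadows ∂_R^j F and ∂_R^j F' are disjoint. -/
/-!
Put `A = [t + 2h(F')]`. Deleting elements outside the tail of `F` only removes elements of
`[t + 2h(F)] ⊆ A`, so `|G ∩ A| = |F ∩ A| - |F \ G|`, while in general `|G' ∩ A| ≥ |F' ∩ A| - |F' \ G'|`.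
If `G = G'`, then `|F \ G| = |F' \ G'|` because `|F| = |F'|`, hence `|F ∩ A| ≥ |F' ∩ A| ≥ t + h(F')`.
Since `h(F') ≤ w`, maximality of `h(F)` then forces `h(F') ≤ h(F)`.
-/

open Finset

namespace Finset

variable {α : Type*} [DecidableEq α] {F G A : Finset α}

theorem sdiff_subset_of_sdiff_subset_of_subset {B : Finset α} (hB : F \ B ⊆ G) (hBA : B ⊆ A) :
    F \ G ⊆ A := by
  intro x hx
  by_contra hxA
  exact (mem_sdiff.1 hx).2 (hB (mem_sdiff.2 ⟨(mem_sdiff.1 hx).1, fun hxB => hxA (hBA hxB)⟩))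

theorem card_inter_add_card_sdiff_of_sdiff_subset (hG : G ⊆ F) (hA : F \ G ⊆ A) :
    #(G ∩ A) + #(F \ G) = #(F ∩ A) := by
  have hunion : G ∩ A ∪ F \ G = F ∩ A := by
    ext x
    simp only [mem_union, mem_inter, mem_sdiff]
    constructor
    · rintro (⟨hxG, hxA⟩ | ⟨hxF, hxG⟩)
      exacts [⟨hG hxG, hxA⟩, ⟨hxF, hA (mem_sdiff.2 ⟨hxF, hxG⟩)⟩]
    · rintro ⟨hxF, hxA⟩
      by_cases hxG : x ∈ G
      exacts [Or.inl ⟨hxG, hxA⟩, Or.inr ⟨hxF, hxG⟩]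
  rw [← card_union_of_disjoint (disjoint_sdiff.mono_left inter_subset_left), hunion]

theorem card_inter_le_card_inter_add_card_sdiff (F G A : Finset α) :
    #(F ∩ A) ≤ #(G ∩ A) + #(F \ G) :=
  calc #(F ∩ A) ≤ #((F ∩ A) \ (G ∩ A)) + #(G ∩ A) := card_le_card_sdiff_add_card
    _ ≤ #(F \ G) + #(G ∩ A) := by
      refine Nat.add_le_add_right (card_le_card fun x hx => ?_) _
      simp only [mem_sdiff, mem_inter] at hx ⊢
      exact ⟨hx.1.1, fun hxG => hx.2 ⟨hxG, hx.1.2⟩⟩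
    _ = #(G ∩ A) + #(F \ G) := add_comm _ _

end Finset

theorem restricted_shadows_disjoint_general (k t w : ℕ) (F F' G G' : Finset ℕ)
    (hF hF' : ℕ)
    (hFcard : F.card = k) (hF'card : F'.card = k)
    (hFmax : ∀ h ≤ w, t + h ≤ (F ∩ Finset.Icc 1 (t + 2 * h)).card → h ≤ hF)
    (hF'le : hF' ≤ w)
    (hF'sat : t + hF' ≤ (F' ∩ Finset.Icc 1 (t + 2 * hF')).card)
    (hlt : hF < hF')
    (hG : G ⊆ F)
    (hGT : F \ Finset.Icc 1 (t + 2 * hF) ⊆ G)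
    (hG' : G' ⊆ F') :
    G ≠ G' := by
  rintro rfl
  set A := Icc 1 (t + 2 * hF')
  have hFA : #(F ∩ A) < t + hF' :=
    lt_of_not_ge fun h => hlt.not_ge (hFmax hF' hF'le h)
  have hdeleted : #(F \ G) = #(F' \ G) := by
    rw [card_sdiff_of_subset hG, card_sdiff_of_subset hG', hFcard, hF'card]
  have hGA := card_inter_add_card_sdiff_of_sdiff_subset hG
    (sdiff_subset_of_sdiff_subset_of_subset (A := A) hGT (Icc_subset_Icc le_rfl (by omega)))
  have hG'A := card_inter_le_card_inter_add_card_sdiff F' G A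
  omega

theorem restricted_shadows_disjoint (n k t w j : ℕ) (F F' G G' : Finset ℕ)
    (hF hF' : ℕ)
    (hj0 : 0 < j) (hjt : j ≤ t)
    (hFsub : F ⊆ Finset.Icc 1 n) (hF'sub : F' ⊆ Finset.Icc 1 n)
    (hFcard : F.card = k) (hF'card : F'.card = k)
    (hFle : hF ≤ w)
    (hFsat : t + hF ≤ (F ∩ Finset.Icc 1 (t + 2 * hF)).card)
    (hFmax : ∀ h ≤ w, t + h ≤ (F ∩ Finset.Icc 1 (t + 2 * h)).card → h ≤ hF)
    (hF'le : hF' ≤ w)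
    (hF'sat : t + hF' ≤ (F' ∩ Finset.Icc 1 (t + 2 * hF')).card)
    (hF'max : ∀ h ≤ w, t + h ≤ (F' ∩ Finset.Icc 1 (t + 2 * h)).card → h ≤ hF')
    (hlt : hF < hF')
    (hG : G ⊆ F) (hGcard : G.card = k - j)
    (hGT : F \ Finset.Icc 1 (t + 2 * hF) ⊆ G)
    (hG' : G' ⊆ F') (hG'card : G'.card = k - j)
    (hG'T : F' \ Finset.Icc 1 (t + 2 * hF') ⊆ G') :
    G ≠ G' :=
  restricted_shadows_disjoint_general k t w F F' G G' hF hF' hFcard hF'card hFmax hF'le hF'sat hlt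
    hG hGT hG'
end

section
/- Let F be a nonempty family of k-subsets of [n] with [t] ⊆ F' for every F' ∈ F, and 0 < j ≤ t < k < n. Then |∂^j F| / |F| ≥ |∂^j A_0| / |A_0| > C(t, j), where A_0 = {A : |A| = k, [t] ⊆ A ⊆ [n]}. -/
open Finset

open scoped Classical

open scoped FinsetFamily

private lemma iter_lym {α : Type*} [Fintype α] [DecidableEq α] {𝒜 : Finset (Finset α)} {m : ℕ}
    (hm : m ≤ Fintype.card α) (h𝒜 : (𝒜 : Set (Finset α)).Sized m) :
    ∀ r, r ≤ m → 𝒜.card * (Fintype.card α).choose (m - r)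
      ≤ (∂ ^[r] 𝒜).card * (Fintype.card α).choose m := by
  intro r
  induction r with
  | zero => intro _; simp
  | succ r ih =>
    intro hr
    have hrm : r ≤ m := by omega
    have h1 := ih hrm
    have hsz : ((∂ ^[r] 𝒜 : Finset (Finset α)) : Set (Finset α)).Sized (m - r) :=
      h𝒜.shadow_iterate
    have hne : m - r ≠ 0 := by omega
    have h2 := Finset.card_div_choose_le_card_shadow_div_choose (𝕜 := ℚ) hne hsz
    have c1 : 0 < (Fintype.card α).choose (m - r) := Nat.choose_pos (by omega)
    have c2 : 0 < (Fintype.card α).choose (m - r - 1) := Nat.choose_pos (by omega)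
    rw [div_le_div_iff₀ (by exact_mod_cast c1) (by exact_mod_cast c2)] at h2
    have h2' : (∂ ^[r] 𝒜).card * (Fintype.card α).choose (m - r - 1)
        ≤ (∂ ^[r+1] 𝒜).card * (Fintype.card α).choose (m - r) := by
      rw [Function.iterate_succ_apply']
      exact_mod_cast h2
    have hsub : m - (r + 1) = m - r - 1 := by omega
    rw [hsub]
    apply Nat.le_of_mul_le_mul_right _ c1
    calc 𝒜.card * (Fintype.card α).choose (m - r - 1) * (Fintype.card α).choose (m - r)
        = (𝒜.card * (Fintype.card α).choose (m - r)) * (Fintype.card α).choose (m - r - 1) := by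
          ring
      _ ≤ ((∂ ^[r] 𝒜).card * (Fintype.card α).choose m) * (Fintype.card α).choose (m - r - 1) :=
          Nat.mul_le_mul_right _ h1
      _ = ((∂ ^[r] 𝒜).card * (Fintype.card α).choose (m - r - 1)) * (Fintype.card α).choose m := by
          ring
      _ ≤ ((∂ ^[r+1] 𝒜).card * (Fintype.card α).choose (m - r)) * (Fintype.card α).choose m :=
          Nat.mul_le_mul_right _ h2'
      _ = (∂ ^[r+1] 𝒜).card * (Fintype.card α).choose m * (Fintype.card α).choose (m - r) := by
          ring

private lemma ground_lym {D : Finset ℕ} {𝒢 : Finset (Finset ℕ)} {m r : ℕ}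
    (hm : m ≤ D.card) (hr : r ≤ m)
    (h𝒢 : ∀ G ∈ 𝒢, G ⊆ D ∧ G.card = m) :
    𝒢.card * D.card.choose (m - r)
      ≤ ((D.powersetCard (m - r)).filter (fun H => ∃ G ∈ 𝒢, H ⊆ G)).card
          * D.card.choose m := by
  classical
  have hcardα : Fintype.card {x // x ∈ D} = D.card := Fintype.card_coe D
  set toSub : Finset ℕ → Finset {x // x ∈ D} := fun G => G.subtype (· ∈ D) with htoSub
  set 𝒜 : Finset (Finset {x // x ∈ D}) := 𝒢.image toSub with h𝒜def
  have hms : ∀ G : Finset ℕ, G ⊆ D →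
      (toSub G).map (Function.Embedding.subtype _) = G := fun G hG =>
    subtype_map_of_mem (fun x hx => hG hx)
  have hcardsub : ∀ G : Finset ℕ, G ⊆ D → (toSub G).card = G.card := by
    intro G hG
    conv_rhs => rw [← hms G hG]
    rw [card_map]
  have hsubmono : ∀ (H G : Finset ℕ), H ⊆ G → toSub H ⊆ toSub G := by
    intro H G hHG x hx
    rw [mem_subtype] at hx ⊢
    exact hHG hx
  have hcard𝒜 : 𝒜.card = 𝒢.card := by
    apply card_image_of_injOn
    intro G hG G' hG' h
    rw [← hms G (h𝒢 G hG).1, ← hms G' (h𝒢 G' hG').1, h]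
  have hsized : (𝒜 : Set (Finset {x // x ∈ D})).Sized m := by
    intro A hA
    simp only [h𝒜def, coe_image, Set.mem_image, mem_coe] at hA
    obtain ⟨G, hG, rfl⟩ := hA
    rw [hcardsub G (h𝒢 G hG).1, (h𝒢 G hG).2]
  have key : ((D.powersetCard (m - r)).filter (fun H => ∃ G ∈ 𝒢, H ⊆ G)).card
      = (∂ ^[r] 𝒜).card := by
    apply card_bij' (fun H _ => toSub H) (fun B _ => B.map (Function.Embedding.subtype _))
    · intro H hH
      simp only [mem_filter, mem_powersetCard] at hH
      obtain ⟨⟨hHD, hHc⟩, G, hG, hHG⟩ := hH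
      rw [mem_shadow_iterate_iff_exists_sdiff]
      refine ⟨toSub G, mem_image_of_mem _ hG, hsubmono H G hHG, ?_⟩
      rw [card_sdiff_of_subset (hsubmono H G hHG), hcardsub G (h𝒢 G hG).1,
        hcardsub H hHD, (h𝒢 G hG).2, hHc]
      omega
    · intro B hB
      rw [mem_shadow_iterate_iff_exists_sdiff] at hB
      obtain ⟨A, hA, hBA, hAB⟩ := hB
      simp only [h𝒜def, mem_image] at hA
      obtain ⟨G, hG, rfl⟩ := hA
      have hBsub : B.map (Function.Embedding.subtype _) ⊆ G := by
        rw [← hms G (h𝒢 G hG).1]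
        exact map_subset_map.2 hBA
      have hBcard : B.card = m - r := by
        rw [card_sdiff_of_subset hBA] at hAB
        have h1 : (toSub G).card = m := by rw [hcardsub G (h𝒢 G hG).1, (h𝒢 G hG).2]
        have h2 : B.card ≤ (toSub G).card := card_le_card hBA
        omega
      simp only [mem_filter, mem_powersetCard]
      exact ⟨⟨hBsub.trans (h𝒢 G hG).1, by rw [card_map, hBcard]⟩, G, hG, hBsub⟩
    · intro H hH
      simp only [mem_filter, mem_powersetCard] at hH
      exact hms H hH.1.1
    · intro B _
      ext x
      simp only [htoSub, mem_subtype, mem_map, Function.Embedding.coe_subtype]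
      constructor
      · rintro ⟨y, hy, h⟩
        rwa [← Subtype.ext h]
      · intro hx
        exact ⟨x, hx, rfl⟩
  rw [key, ← hcard𝒜, ← hcardα]
  exact iter_lym (hcardα ▸ hm) hsized r hr

private lemma fiber_card {n t c : ℕ} {𝓗 : Finset (Finset ℕ)}
    (hsub : ∀ F ∈ 𝓗, F ⊆ Icc 1 n) (hstar : ∀ F ∈ 𝓗, Icc 1 t ⊆ F)
    (htn : t ≤ n)
    {S : Finset ℕ} (hS : S ⊆ Icc 1 t) (hsk : S.card ≤ c) :
    ((((Icc 1 n).powersetCard c).filter (fun G => ∃ F ∈ 𝓗, G ⊆ F)).filter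
        (fun G => G ∩ Icc 1 t = S)).card
      = (((Icc 1 n \ Icc 1 t).powersetCard (c - S.card)).filter
          (fun H => ∃ F ∈ 𝓗, H ⊆ F \ Icc 1 t)).card := by
  classical
  have hTI : Icc 1 t ⊆ Icc 1 n := Icc_subset_Icc le_rfl htn
  apply card_bij' (fun G _ => G \ Icc 1 t) (fun H _ => S ∪ H)
  · intro G hG
    simp only [mem_filter, mem_powersetCard] at hG
    obtain ⟨⟨⟨hGI, hGc⟩, F, hF, hGF⟩, hGT⟩ := hG
    have hcd : (G \ Icc 1 t).card = c - S.card := by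
      rw [← sdiff_inter_self_left G (Icc 1 t), card_sdiff_of_subset inter_subset_left, hGT, hGc]
    simp only [mem_filter, mem_powersetCard]
    exact ⟨⟨sdiff_subset_sdiff hGI Subset.rfl, hcd⟩, F, hF,
      sdiff_subset_sdiff hGF Subset.rfl⟩
  · intro H hH
    simp only [mem_filter, mem_powersetCard] at hH
    obtain ⟨⟨hHD, hHc⟩, F, hF, hHF⟩ := hH
    have hdisj : Disjoint S H := by
      rw [disjoint_left]
      intro x hxS hxH
      exact (mem_sdiff.1 (hHD hxH)).2 (hS hxS)
    have hHT : H ∩ Icc 1 t = ∅ := by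
      rw [← disjoint_iff_inter_eq_empty, disjoint_left]
      intro x hxH hxT
      exact (mem_sdiff.1 (hHD hxH)).2 hxT
    simp only [mem_filter, mem_powersetCard]
    refine ⟨⟨⟨union_subset (hS.trans hTI) (hHD.trans sdiff_subset), ?_⟩,
      F, hF, union_subset (hS.trans (hstar F hF)) (hHF.trans sdiff_subset)⟩, ?_⟩
    · rw [card_union_of_disjoint hdisj, hHc]; omega
    · rw [union_inter_distrib_right, inter_eq_left.2 hS, hHT, union_empty]
  · intro G hG
    simp only [mem_filter, mem_powersetCard] at hG
    rw [← hG.2]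
    ext x
    simp only [mem_union, mem_inter, mem_sdiff]
    tauto
  · intro H hH
    simp only [mem_filter, mem_powersetCard] at hH
    obtain ⟨⟨hHD, _⟩, _⟩ := hH
    ext x
    simp only [mem_sdiff, mem_union]
    constructor
    · rintro ⟨hx | hx, hxT⟩
      · exact absurd (hS hx) hxT
      · exact hx
    · intro hx
      exact ⟨Or.inr hx, (mem_sdiff.1 (hHD hx)).2⟩

private lemma filter_inst {α : Type*} (p : α → Prop) (h1 h2 : DecidablePred p)
    (s : Finset α) : @Finset.filter α p h1 s = @Finset.filter α p h2 s := by
  rw [Subsingleton.elim h1 h2]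

private lemma star_ext {n t c : ℕ} (htn : t ≤ n) (𝓗 : Finset (Finset ℕ))
    (hfull : ∀ H ∈ ((Icc 1 n) \ Icc 1 t).powersetCard c, ∃ A ∈ 𝓗, H ⊆ A \ Icc 1 t) :
    ((((Icc 1 n) \ Icc 1 t).powersetCard c).filter
        (fun H => ∃ A ∈ 𝓗, H ⊆ A \ Icc 1 t)).card = (n - t).choose c := by
  classical
  have hTI : Icc 1 t ⊆ Icc 1 n := Icc_subset_Icc le_rfl htn
  have hc : ((Icc 1 n) \ Icc 1 t).card = n - t := by
    rw [card_sdiff_of_subset hTI, Nat.card_Icc, Nat.card_Icc]; omega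
  have hpc : (((Icc 1 n) \ Icc 1 t).powersetCard c).card = (n - t).choose c := by
    rw [card_powersetCard, hc]
  rw [← hpc]
  congr 1
  ext H
  rw [mem_filter]
  exact ⟨fun h => h.1, fun h => ⟨h, hfull H h⟩⟩

private lemma star_full {n k t c : ℕ} (hkn : k ≤ n) (htc : t + c ≤ k) :
    ∀ H ∈ ((Icc 1 n) \ Icc 1 t).powersetCard c,
      ∃ A ∈ ((Icc 1 n).powersetCard k).filter (fun A => Icc 1 t ⊆ A), H ⊆ A \ Icc 1 t := by
  have htn : t ≤ n := by omega
  have hTI : Icc 1 t ⊆ Icc 1 n := Icc_subset_Icc le_rfl htn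
  intro H hH
  rw [mem_powersetCard] at hH
  obtain ⟨hHD, hHc⟩ := hH
  have hdisj : Disjoint (Icc 1 t) H := by
    rw [disjoint_right]
    intro x hxH
    exact (mem_sdiff.1 (hHD hxH)).2
  have hcu : (Icc 1 t ∪ H).card ≤ k := by
    rw [card_union_of_disjoint hdisj, Nat.card_Icc, hHc]; omega
  have hIcard : k ≤ (Icc 1 n).card := by rw [Nat.card_Icc]; omega
  obtain ⟨A, hUA, hAI, hAc⟩ := exists_subsuperset_card_eq
    (union_subset hTI (hHD.trans sdiff_subset)) hcu hIcard
  refine ⟨A, mem_filter.2 ⟨mem_powersetCard.2 ⟨hAI, hAc⟩, subset_union_left.trans hUA⟩, ?_⟩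
  intro x hx
  exact mem_sdiff.2 ⟨hUA (mem_union_right _ hx), (mem_sdiff.1 (hHD hx)).2⟩

private lemma star_card {n k t : ℕ} (htk : t ≤ k) (hkn : k ≤ n) :
    (((Icc 1 n).powersetCard k).filter (fun A => Icc 1 t ⊆ A)).card
      = (n - t).choose (k - t) := by
  classical
  set 𝓐 := ((Icc 1 n).powersetCard k).filter (fun A => Icc 1 t ⊆ A) with h𝓐
  have hsub : ∀ F ∈ 𝓐, F ⊆ Icc 1 n := fun F hF =>
    (mem_powersetCard.1 (mem_filter.1 hF).1).1
  have hstar : ∀ F ∈ 𝓐, Icc 1 t ⊆ F := fun F hF => (mem_filter.1 hF).2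
  have hTc : (Icc 1 t).card = t := by rw [Nat.card_Icc]; omega
  have h1 := fiber_card (c := k) hsub hstar (by omega) (Subset.rfl (s := Icc 1 t))
    (by rw [hTc]; exact htk)
  have h2 : (((Icc 1 n).powersetCard k).filter (fun G => ∃ F ∈ 𝓐, G ⊆ F)).filter
      (fun G => G ∩ Icc 1 t = Icc 1 t) = 𝓐 := by
    ext A
    constructor
    · intro hA
      obtain ⟨h1', hint⟩ := mem_filter.1 hA
      obtain ⟨hp, _⟩ := mem_filter.1 h1'
      exact mem_filter.2 ⟨hp, inter_eq_right.1 hint⟩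
    · intro hA
      obtain ⟨hp, hTA⟩ := mem_filter.1 hA
      exact mem_filter.2 ⟨mem_filter.2 ⟨hp, ⟨A, hA, Subset.rfl⟩⟩, inter_eq_right.2 hTA⟩
  rw [h2, hTc] at h1
  rw [h𝓐] at h1 ⊢
  rw [h1]
  have hse := star_ext (n := n) (t := t) (c := k - t) (by omega) 𝓐
    (star_full hkn (by omega))
  rw [h𝓐] at hse
  exact (congrArg card (filter_inst _ _ _ _)).trans hse

private lemma fiber_lym {n k t j : ℕ} {𝓗 : Finset (Finset ℕ)}
    (hjt : j ≤ t) (htk : t < k) (hkn : k ≤ n)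
    (hsub : ∀ F ∈ 𝓗, F ⊆ Icc 1 n) (hcard : ∀ F ∈ 𝓗, F.card = k)
    (hstar : ∀ F ∈ 𝓗, Icc 1 t ⊆ F)
    {S : Finset ℕ} (hST : S ⊆ Icc 1 t) (hS1 : t - j ≤ S.card) (hS2 : S.card ≤ k - j) :
    𝓗.card * (n - t).choose (k - j - S.card)
      ≤ ((((Icc 1 n).powersetCard (k - j)).filter (fun G => ∃ F ∈ 𝓗, G ⊆ F)).filter
          (fun G => G ∩ Icc 1 t = S)).card * (n - t).choose (k - t) := by
  classical
  have htn : t ≤ n := by omega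
  have hTc : (Icc 1 t).card = t := by rw [Nat.card_Icc]; omega
  have hTI : Icc 1 t ⊆ Icc 1 n := Icc_subset_Icc le_rfl htn
  have hDc : ((Icc 1 n) \ Icc 1 t).card = n - t := by
    rw [card_sdiff_of_subset hTI, Nat.card_Icc, Nat.card_Icc]; omega
  rw [fiber_card hsub hstar htn hST hS2]
  set 𝒢 := 𝓗.image (fun F => F \ Icc 1 t) with h𝒢
  have h𝒢mem : ∀ G ∈ 𝒢, G ⊆ (Icc 1 n \ Icc 1 t) ∧ G.card = k - t := by
    intro G hG
    obtain ⟨F, hF, rfl⟩ := mem_image.1 hG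
    refine ⟨sdiff_subset_sdiff (hsub F hF) Subset.rfl, ?_⟩
    rw [card_sdiff_of_subset (hstar F hF), hcard F hF, hTc]
  have hc𝒢 : 𝒢.card = 𝓗.card := by
    apply card_image_of_injOn
    intro F hF F' hF' h
    have e1 := union_sdiff_of_subset (hstar F hF)
    have e2 := union_sdiff_of_subset (hstar F' hF')
    rw [← e1, ← e2]
    exact congrArg (fun X => Icc 1 t ∪ X) h
  have key := ground_lym (D := Icc 1 n \ Icc 1 t) (𝒢 := 𝒢)
    (m := k - t) (r := S.card - (t - j))
    (by rw [hDc]; omega) (by omega) h𝒢mem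
  have hmr : k - t - (S.card - (t - j)) = k - j - S.card := by omega
  rw [hmr, hDc, hc𝒢] at key
  refine key.trans (Nat.mul_le_mul_right _ (card_le_card ?_))
  intro H hH
  rw [mem_filter] at hH ⊢
  obtain ⟨hHp, G, hG', hHG⟩ := hH
  obtain ⟨F, hF, rfl⟩ := mem_image.1 hG'
  exact ⟨hHp, F, hF, hHG⟩

private lemma main_all (n k t j : ℕ) (𝓕 : Finset (Finset ℕ))
    (hj0 : 0 < j) (hjt : j ≤ t) (htk : t < k) (hkn : k < n)
    (h𝓕 : 𝓕.Nonempty)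
    (hsub : ∀ F ∈ 𝓕, F ⊆ Finset.Icc 1 n)
    (hcard : ∀ F ∈ 𝓕, F.card = k)
    (hstar : ∀ F ∈ 𝓕, Finset.Icc 1 t ⊆ F) :
    ((((Finset.Icc 1 n).powersetCard (k - j)).filter
        (fun G => ∃ F ∈ 𝓕, G ⊆ F)).card : ℚ) / (𝓕.card : ℚ) ≥
      ((((Finset.Icc 1 n).powersetCard (k - j)).filter
          (fun G => ∃ A ∈ ((Finset.Icc 1 n).powersetCard k).filter
              (fun A => Finset.Icc 1 t ⊆ A), G ⊆ A)).card : ℚ) /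
        ((((Finset.Icc 1 n).powersetCard k).filter
            (fun A => Finset.Icc 1 t ⊆ A)).card : ℚ)
    ∧
    ((((Finset.Icc 1 n).powersetCard (k - j)).filter
          (fun G => ∃ A ∈ ((Finset.Icc 1 n).powersetCard k).filter
              (fun A => Finset.Icc 1 t ⊆ A), G ⊆ A)).card : ℚ) /
        ((((Finset.Icc 1 n).powersetCard k).filter
            (fun A => Finset.Icc 1 t ⊆ A)).card : ℚ) > (t.choose j : ℚ) := by
  classical
  have htn : t ≤ n := by omega
  have hTI : Icc 1 t ⊆ Icc 1 n := Icc_subset_Icc le_rfl htn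
  have hTc : (Icc 1 t).card = t := by rw [Nat.card_Icc]; omega
  set 𝓐 := ((Icc 1 n).powersetCard k).filter (fun A => Icc 1 t ⊆ A) with h𝓐
  have hsubA : ∀ F ∈ 𝓐, F ⊆ Icc 1 n := fun F hF =>
    (mem_powersetCard.1 (mem_filter.1 hF).1).1
  have hcardA : ∀ F ∈ 𝓐, F.card = k := fun F hF =>
    (mem_powersetCard.1 (mem_filter.1 hF).1).2
  have hstarA : ∀ F ∈ 𝓐, Icc 1 t ⊆ F := fun F hF => (mem_filter.1 hF).2
  have hA0 : 𝓐.card = (n - t).choose (k - t) := star_card (le_of_lt htk) (le_of_lt hkn)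
  have hApos : 0 < 𝓐.card := by rw [hA0]; exact Nat.choose_pos (by omega)
  have hFpos : 0 < 𝓕.card := card_pos.2 h𝓕
  set shF := ((Icc 1 n).powersetCard (k - j)).filter (fun G => ∃ F ∈ 𝓕, G ⊆ F) with hshF
  set shA := ((Icc 1 n).powersetCard (k - j)).filter (fun G => ∃ A ∈ 𝓐, G ⊆ A) with hshA
  -- exact value of star fibers
  have hAfib : ∀ S : Finset ℕ, S ⊆ Icc 1 t → t - j ≤ S.card → S.card ≤ k - j →
      (shA.filter (fun G => G ∩ Icc 1 t = S)).card = (n - t).choose (k - j - S.card) := by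
    intro S hST h1 h2
    rw [hshA, fiber_card hsubA hstarA htn hST h2]
    exact star_ext (by omega) 𝓐 (star_full (le_of_lt hkn) (by omega))
  -- empty star fibers
  have hAfib0 : ∀ S : Finset ℕ, ¬(t - j ≤ S.card ∧ S.card ≤ k - j) →
      (shA.filter (fun G => G ∩ Icc 1 t = S)).card = 0 := by
    intro S hc1
    rw [card_eq_zero, filter_eq_empty_iff]
    intro G hG hGT
    rw [hshA, mem_filter, mem_powersetCard] at hG
    obtain ⟨⟨hGI, hGc⟩, A, hA, hGA⟩ := hG
    have hSG : S ⊆ G := by rw [← hGT]; exact inter_subset_left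
    have hSle : S.card ≤ k - j := hGc ▸ card_le_card hSG
    have h1 : (G \ Icc 1 t).card = k - j - S.card := by
      rw [← sdiff_inter_self_left, card_sdiff_of_subset inter_subset_left, hGT, hGc]
    have h2 : (A \ Icc 1 t).card = k - t := by
      rw [card_sdiff_of_subset (hstarA A hA), hcardA A hA, hTc]
    have h3 : (G \ Icc 1 t).card ≤ (A \ Icc 1 t).card :=
      card_le_card (sdiff_subset_sdiff hGA Subset.rfl)
    omega
  -- termwise comparison
  have key1 : ∀ S ∈ (Icc 1 t).powerset,
      (shA.filter (fun G => G ∩ Icc 1 t = S)).card * 𝓕.card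
        ≤ (shF.filter (fun G => G ∩ Icc 1 t = S)).card * 𝓐.card := by
    intro S hS
    have hST : S ⊆ Icc 1 t := mem_powerset.1 hS
    by_cases hc1 : t - j ≤ S.card ∧ S.card ≤ k - j
    · rw [hAfib S hST hc1.1 hc1.2, hA0, mul_comm ((n - t).choose (k - j - S.card)) _]
      rw [hshF]
      exact fiber_lym hjt htk (le_of_lt hkn) hsub hcard hstar hST hc1.1 hc1.2
    · rw [hAfib0 S hc1, Nat.zero_mul]
      exact Nat.zero_le _
  -- fiberwise sums
  have hsumF : shF.card = ∑ S ∈ (Icc 1 t).powerset,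
      (shF.filter (fun G => G ∩ Icc 1 t = S)).card :=
    card_eq_sum_card_fiberwise (fun G _ => mem_powerset.2 inter_subset_right)
  have hsumA : shA.card = ∑ S ∈ (Icc 1 t).powerset,
      (shA.filter (fun G => G ∩ Icc 1 t = S)).card :=
    card_eq_sum_card_fiberwise (fun G _ => mem_powerset.2 inter_subset_right)
  have part1 : shA.card * 𝓕.card ≤ shF.card * 𝓐.card := by
    rw [hsumF, hsumA, sum_mul, sum_mul]
    exact sum_le_sum key1
  -- strict lower bound for the star shadow
  have part2 : t.choose j * 𝓐.card < shA.card := by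
    have hP1sub : (Icc 1 t).powersetCard (t - j) ⊆ (Icc 1 t).powerset :=
      fun S hS => mem_powerset.2 (mem_powersetCard.1 hS).1
    have hP2sub : (Icc 1 t).powersetCard (t - j + 1) ⊆ (Icc 1 t).powerset :=
      fun S hS => mem_powerset.2 (mem_powersetCard.1 hS).1
    have hdisj : Disjoint ((Icc 1 t).powersetCard (t - j))
        ((Icc 1 t).powersetCard (t - j + 1)) := by
      rw [disjoint_left]
      intro S h1 h2
      have := (mem_powersetCard.1 h1).2
      have := (mem_powersetCard.1 h2).2
      omega
    have hs1 : ∑ S ∈ (Icc 1 t).powersetCard (t - j),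
        (shA.filter (fun G => G ∩ Icc 1 t = S)).card = t.choose j * 𝓐.card := by
      rw [sum_congr rfl (fun S hS => by
        obtain ⟨hST, hSc⟩ := mem_powersetCard.1 hS
        rw [hAfib S hST (by omega) (by omega), hSc])]
      rw [sum_const, card_powersetCard, hTc, smul_eq_mul]
      have e1 : k - j - (t - j) = k - t := by omega
      rw [e1, Nat.choose_symm hjt, hA0]
    have hs2 : 0 < ∑ S ∈ (Icc 1 t).powersetCard (t - j + 1),
        (shA.filter (fun G => G ∩ Icc 1 t = S)).card := by
      rw [sum_congr rfl (fun S hS => by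
        obtain ⟨hST, hSc⟩ := mem_powersetCard.1 hS
        rw [hAfib S hST (by omega) (by omega), hSc])]
      rw [sum_const, card_powersetCard, hTc, smul_eq_mul]
      have e2 : k - j - (t - j + 1) = k - t - 1 := by omega
      rw [e2]
      exact Nat.mul_pos (Nat.choose_pos (by omega)) (Nat.choose_pos (by omega))
    calc t.choose j * 𝓐.card
        < ∑ S ∈ (Icc 1 t).powersetCard (t - j),
            (shA.filter (fun G => G ∩ Icc 1 t = S)).card
          + ∑ S ∈ (Icc 1 t).powersetCard (t - j + 1),
            (shA.filter (fun G => G ∩ Icc 1 t = S)).card := by omega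
      _ = ∑ S ∈ (Icc 1 t).powersetCard (t - j) ∪ (Icc 1 t).powersetCard (t - j + 1),
            (shA.filter (fun G => G ∩ Icc 1 t = S)).card := (sum_union hdisj).symm
      _ ≤ ∑ S ∈ (Icc 1 t).powerset,
            (shA.filter (fun G => G ∩ Icc 1 t = S)).card :=
          sum_le_sum_of_subset (union_subset hP1sub hP2sub)
      _ = shA.card := hsumA.symm
  have hAq : (0 : ℚ) < (𝓐.card : ℚ) := by exact_mod_cast hApos
  have hFq : (0 : ℚ) < (𝓕.card : ℚ) := by exact_mod_cast hFpos
  constructor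
  · rw [ge_iff_le, div_le_div_iff₀ hAq hFq]
    have p1 : ((shA.card : ℚ)) * (𝓕.card : ℚ) ≤ (shF.card : ℚ) * (𝓐.card : ℚ) := by
      exact_mod_cast part1
    refine le_trans (le_of_eq ?_) p1
    norm_cast
    congr 1
    exact congrArg card (filter_inst _ _ _ _)
  · rw [gt_iff_lt, lt_div_iff₀ hAq]
    have p2 : ((t.choose j : ℚ)) * (𝓐.card : ℚ) < (shA.card : ℚ) := by
      exact_mod_cast part2
    refine lt_of_lt_of_le p2 (le_of_eq ?_)
    norm_cast
    exact congrArg card (filter_inst _ _ _ _)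

theorem star_shadow_ratio (n k t j : ℕ) (𝓕 : Finset (Finset ℕ))
    (hj0 : 0 < j) (hjt : j ≤ t) (htk : t < k) (hkn : k < n)
    (h𝓕 : 𝓕.Nonempty)
    (hsub : ∀ F ∈ 𝓕, F ⊆ Finset.Icc 1 n)
    (hcard : ∀ F ∈ 𝓕, F.card = k)
    (hstar : ∀ F ∈ 𝓕, Finset.Icc 1 t ⊆ F) :
    ((((Finset.Icc 1 n).powersetCard (k - j)).filter
        (fun G => ∃ F ∈ 𝓕, G ⊆ F)).card : ℚ) / (𝓕.card : ℚ) ≥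
      ((((Finset.Icc 1 n).powersetCard (k - j)).filter
          (fun G => ∃ A ∈ ((Finset.Icc 1 n).powersetCard k).filter
              (fun A => Finset.Icc 1 t ⊆ A), G ⊆ A)).card : ℚ) /
        ((((Finset.Icc 1 n).powersetCard k).filter
            (fun A => Finset.Icc 1 t ⊆ A)).card : ℚ)
    ∧
    ((((Finset.Icc 1 n).powersetCard (k - j)).filter
          (fun G => ∃ A ∈ ((Finset.Icc 1 n).powersetCard k).filter
              (fun A => Finset.Icc 1 t ⊆ A), G ⊆ A)).card : ℚ) /
        ((((Finset.Icc 1 n).powersetCard k).filter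
            (fun A => Finset.Icc 1 t ⊆ A)).card : ℚ) > (t.choose j : ℚ) := by
  exact main_all n k t j 𝓕 hj0 hjt htk hkn h𝓕 hsub hcard hstar
end

section
/- Let F be a nonempty family of k-subsets of [n] such that every member A of F satisfies |A ∩ [t+2]| ≥ t+1 (i.e., F ⊆ A_0 ∪ A_1). Then for 1 < j < t, |∂^j F| / |F| ≥ C(t+2, j+1) / (t+2). -/
/-!
Double count the pairs `(F, G)` with `F ∈ 𝓕`, `G` in the `j`-shadow, `G ⊆ F` and `F \ G ⊆ [t+2]`.
Every `F` meets `[t+2]` in at least `t + 1` points, so it lies above at least `C(t+1, j)` such `G`.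
Conversely such a `G` meets `[t+2]` in at least `t + 1 - j` points, so `F \ G` is one of at most
`C(j+1, j) = j + 1` subsets of `[t+2] \ G`. Hence `C(t+1, j) |𝓕| ≤ (j+1) |∂^j 𝓕|`, and
`C(t+1, j) / (j+1) = C(t+2, j+1) / (t+2)`.
-/

open Finset

namespace Finset

variable {α : Type*} [DecidableEq α] {S F G : Finset α} {s j k : ℕ}

lemma card_sdiff_le_of_le_card_inter (hFG : #(F \ G) = j) (hs : s ≤ #(F ∩ S)) :
    #(S \ G) ≤ #S + j - s := by
  have hsplit : F ∩ S ⊆ (S ∩ G) ∪ (F \ G) := by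
    intro x hx
    by_cases hxG : x ∈ G <;> simp_all
  have hle := (card_le_card hsplit).trans (card_union_le _ _)
  have hS := card_sdiff_add_card_inter S G
  omega

lemma choose_le_card_filter_sdiff_subset (𝒢 : Finset (Finset α)) (hs : s ≤ #(F ∩ S))
    (h𝒢 : ∀ J ∈ (F ∩ S).powersetCard j, F \ J ∈ 𝒢) :
    s.choose j ≤ #{G ∈ 𝒢 | G ⊆ F ∧ F \ G ⊆ S} := by
  calc s.choose j ≤ #((F ∩ S).powersetCard j) := by
        rw [card_powersetCard]
        exact Nat.choose_le_choose j hs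
    _ ≤ #{G ∈ 𝒢 | G ⊆ F ∧ F \ G ⊆ S} := by
      refine card_le_card_of_injOn (F \ ·) (fun J hJ => ?_) (fun J₁ hJ₁ J₂ hJ₂ h => ?_)
      · have hJS := (mem_powersetCard.1 hJ).1
        rw [mem_coe, mem_filter, sdiff_sdiff_eq_self (hJS.trans inter_subset_left)]
        exact ⟨h𝒢 J hJ, sdiff_subset, hJS.trans inter_subset_right⟩
      · have hJ₁F := (mem_powersetCard.1 hJ₁).1.trans inter_subset_left
        have hJ₂F := (mem_powersetCard.1 hJ₂).1.trans inter_subset_left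
        rw [← sdiff_sdiff_eq_self hJ₁F, ← sdiff_sdiff_eq_self hJ₂F]
        exact congrArg (F \ ·) h

lemma card_filter_sdiff_subset_le_choose (𝓕 : Finset (Finset α)) (hjk : j ≤ k)
    (h𝓕 : ∀ F ∈ 𝓕, #F = k) (hG : #G = k - j) (hs : ∀ F ∈ 𝓕, s ≤ #(F ∩ S)) :
    #{F ∈ 𝓕 | G ⊆ F ∧ F \ G ⊆ S} ≤ (#S + j - s).choose j := by
  have hcard_sdiff : ∀ F ∈ 𝓕, G ⊆ F → #(F \ G) = j := fun F hF hGF => by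
    rw [card_sdiff_of_subset hGF, h𝓕 F hF, hG]
    omega
  obtain h | ⟨F₀, hF₀⟩ := eq_empty_or_nonempty {F ∈ 𝓕 | G ⊆ F ∧ F \ G ⊆ S}
  · rw [h, card_empty]
    exact Nat.zero_le _
  obtain ⟨hF₀𝓕, hGF₀, -⟩ := mem_filter.1 hF₀
  calc #{F ∈ 𝓕 | G ⊆ F ∧ F \ G ⊆ S} ≤ #((S \ G).powersetCard j) := by
        refine card_le_card_of_injOn (· \ G) (fun F hF => ?_) (fun F₁ hF₁ F₂ hF₂ h => ?_)
        · obtain ⟨hF𝓕, hGF, hFS⟩ := mem_filter.1 hF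
          exact mem_powersetCard.2
            ⟨subset_sdiff.2 ⟨hFS, sdiff_disjoint⟩, hcard_sdiff F hF𝓕 hGF⟩
        · rw [← sdiff_union_of_subset (mem_filter.1 hF₁).2.1,
            ← sdiff_union_of_subset (mem_filter.1 hF₂).2.1]
          exact congrArg (· ∪ G) h
    _ = (#(S \ G)).choose j := card_powersetCard j _
    _ ≤ (#S + j - s).choose j := Nat.choose_le_choose j
          (card_sdiff_le_of_le_card_inter (hcard_sdiff F₀ hF₀𝓕 hGF₀) (hs F₀ hF₀𝓕))

theorem choose_mul_card_le_choose_mul_card (𝓕 𝒢 : Finset (Finset α)) (hjk : j ≤ k)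
    (h𝓕 : ∀ F ∈ 𝓕, #F = k) (h𝒢 : ∀ G ∈ 𝒢, #G = k - j) (hs : ∀ F ∈ 𝓕, s ≤ #(F ∩ S))
    (hshadow : ∀ F ∈ 𝓕, ∀ J ∈ (F ∩ S).powersetCard j, F \ J ∈ 𝒢) :
    s.choose j * #𝓕 ≤ (#S + j - s).choose j * #𝒢 := by
  rw [mul_comm, mul_comm _ #𝒢]
  exact card_mul_le_card_mul (fun F G : Finset α => G ⊆ F ∧ F \ G ⊆ S)
    (fun F hF => choose_le_card_filter_sdiff_subset 𝒢 (hs F hF) (hshadow F hF))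
    (fun G hG => card_filter_sdiff_subset_le_choose 𝓕 hjk h𝓕 (h𝒢 G hG) hs)

end Finset

theorem semistar_subfamily_shadow_general (n k t j : ℕ) (𝓕 : Finset (Finset ℕ))
    (hjt : j < t) (htk : t < k)
    (h𝓕 : 𝓕.Nonempty)
    (hsub : ∀ F ∈ 𝓕, F ⊆ Finset.Icc 1 n)
    (hcard : ∀ F ∈ 𝓕, F.card = k)
    (hsemi : ∀ F ∈ 𝓕, t + 1 ≤ (F ∩ Finset.Icc 1 (t + 2)).card) :
    ((((Finset.Icc 1 n).powersetCard (k - j)).filter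
        (fun G => ∃ F ∈ 𝓕, G ⊆ F)).card : ℚ) / (𝓕.card : ℚ) ≥
      ((t + 2).choose (j + 1) : ℚ) / ((t + 2 : ℕ) : ℚ) := by
  set 𝒢 := ((Icc 1 n).powersetCard (k - j)).filter (fun G => ∃ F ∈ 𝓕, G ⊆ F)
  have hjk : j ≤ k := by omega
  have hshadow : ∀ F ∈ 𝓕, ∀ J ∈ (F ∩ Icc 1 (t + 2)).powersetCard j, F \ J ∈ 𝒢 := by
    intro F hF J hJ
    obtain ⟨hJS, hJcard⟩ := mem_powersetCard.1 hJ
    refine mem_filter.2 ⟨mem_powersetCard.2 ⟨sdiff_subset.trans (hsub F hF), ?_⟩, F, hF, sdiff_subset⟩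
    rw [card_sdiff_of_subset (hJS.trans inter_subset_left), hcard F hF, hJcard]
  have hdouble := choose_mul_card_le_choose_mul_card 𝓕 𝒢 hjk hcard
    (fun G hG => (mem_powersetCard.1 (mem_filter.1 hG).1).2) hsemi hshadow
  rw [Nat.card_Icc, show t + 2 + 1 - 1 + j - (t + 1) = j + 1 by omega,
    Nat.choose_succ_self_right] at hdouble
  have hpascal : (t + 2) * (t + 1).choose j = (t + 2).choose (j + 1) * (j + 1) :=
    Nat.add_one_mul_choose_eq (t + 1) j
  have hmain : (t + 2).choose (j + 1) * #𝓕 ≤ (t + 2) * #𝒢 := by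
    refine Nat.le_of_mul_le_mul_left ?_ j.succ_pos
    calc (j + 1) * ((t + 2).choose (j + 1) * #𝓕) = (t + 2) * ((t + 1).choose j * #𝓕) := by
          rw [← mul_assoc, ← mul_assoc, hpascal, mul_comm (j + 1)]
      _ ≤ (t + 2) * ((j + 1) * #𝒢) := Nat.mul_le_mul_left _ hdouble
      _ = (j + 1) * ((t + 2) * #𝒢) := by ring
  rw [ge_iff_le, div_le_div_iff₀ (by positivity) (by exact_mod_cast h𝓕.card_pos)]
  exact_mod_cast hmain.trans_eq (mul_comm _ _)

theorem semistar_subfamily_shadow (n k t j : ℕ) (𝓕 : Finset (Finset ℕ))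
    (hj1 : 1 < j) (hjt : j < t) (htk : t < k) (hkn : k < n)
    (h𝓕 : 𝓕.Nonempty)
    (hsub : ∀ F ∈ 𝓕, F ⊆ Finset.Icc 1 n)
    (hcard : ∀ F ∈ 𝓕, F.card = k)
    (hsemi : ∀ F ∈ 𝓕, t + 1 ≤ (F ∩ Finset.Icc 1 (t + 2)).card) :
    ((((Finset.Icc 1 n).powersetCard (k - j)).filter
        (fun G => ∃ F ∈ 𝓕, G ⊆ F)).card : ℚ) / (𝓕.card : ℚ) ≥
      ((t + 2).choose (j + 1) : ℚ) / ((t + 2 : ℕ) : ℚ) :=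
  semistar_subfamily_shadow_general n k t j 𝓕 hjt htk h𝓕 hsub hcard hsemi
end

section
/- For integers 1 ≤ j < t < k−1, (k² − t² − t − j(k − 2t − 1) − j²) / ((t−j)(k−t−1)) > (k + t + 1 − j)/(t − j); equivalently (t−j)/(k+t+1−j) > α/β where α/β is the ratio of the two bracketed quantities from Section 3. -/
theorem beta_over_alpha_ineq (j t k : ℕ) (hj : 1 ≤ j) (hjt : j < t) (hk : t + 2 ≤ k) :
    ((k : ℚ) ^ 2 - (t : ℚ) ^ 2 - t - j * ((k : ℚ) - 2 * t - 1) - (j : ℚ) ^ 2) /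
        (((t : ℚ) - j) * ((k : ℚ) - t - 1)) >
      ((k : ℚ) + t + 1 - j) / ((t : ℚ) - j) := by
  have hjq : (j : ℚ) < t := by exact_mod_cast hjt
  have hkq : (t : ℚ) + 2 ≤ k := by exact_mod_cast hk
  have hjq1 : (1 : ℚ) ≤ j := by exact_mod_cast hj
  have h1 : (0:ℚ) < (t:ℚ) - j := by linarith
  have h2 : (0:ℚ) < (t:ℚ) * (j + 1) - j ^ 2 + 1 := by nlinarith
  rw [gt_iff_lt, div_lt_div_iff₀ h1 (by nlinarith)]
  nlinarith [mul_pos h1 h2]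
end

section
/- Let F be a t-intersecting family of k-subsets such that every F' ∈ F satisfies |F' ∩ D| ≥ t for a fixed (t+1)-set D. Suppose F is also shifted with D = [t+1]. Define T_2 = {T : T = F'\[t+1] for some F' ∈ F with at least two distinct t-subsets G ⊆ [t+1] satisfying G ∪ T ∈ F}. Then T_2 is an intersecting family: any two members of T_2 have nonempty intersection. -/
open Finset

/-- A family of subsets of `[n] = Icc 1 n` is shifted if it is closed under
replacing a larger element by a smaller one. -/
def IsShifted (n : ℕ) (𝓕 : Finset (Finset ℕ)) : Prop :=
  ∀ F ∈ 𝓕, ∀ i ∈ Finset.Icc 1 n, ∀ j ∈ Finset.Icc 1 n,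
    i < j → j ∈ F → i ∉ F → insert i (F.erase j) ∈ 𝓕

theorem T2_intersecting (n k t : ℕ) (𝓕 : Finset (Finset ℕ))
    (ht : 2 ≤ t) (htk : t < k)
    (hsub : ∀ F ∈ 𝓕, F ⊆ Finset.Icc 1 n)
    (hcard : ∀ F ∈ 𝓕, F.card = k)
    (hint : ∀ F ∈ 𝓕, ∀ F' ∈ 𝓕, t ≤ (F ∩ F').card)
    (hsemi : ∀ F ∈ 𝓕, t ≤ (F ∩ Finset.Icc 1 (t + 1)).card)
    (hshift : IsShifted n 𝓕)
    (T T' : Finset ℕ)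
    (hT : ∃ G G' : Finset ℕ, G ⊆ Finset.Icc 1 (t + 1) ∧ G' ⊆ Finset.Icc 1 (t + 1) ∧
      G.card = t ∧ G'.card = t ∧ G ≠ G' ∧ G ∪ T ∈ 𝓕 ∧ G' ∪ T ∈ 𝓕 ∧
      T ⊆ Finset.Icc (t + 2) n)
    (hT' : ∃ G G' : Finset ℕ, G ⊆ Finset.Icc 1 (t + 1) ∧ G' ⊆ Finset.Icc 1 (t + 1) ∧
      G.card = t ∧ G'.card = t ∧ G ≠ G' ∧ G ∪ T' ∈ 𝓕 ∧ G' ∪ T' ∈ 𝓕 ∧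
      T' ⊆ Finset.Icc (t + 2) n) :
    (T ∩ T').Nonempty := by
  obtain ⟨G, G', hG, hG', hGc, hG'c, hGne, hGF, hG'F, hTsub⟩ := hT
  obtain ⟨H, H', hH, hH', hHc, hH'c, hHne, hHF, hH'F, hT'sub⟩ := hT'
  by_contra hempty
  rw [Finset.not_nonempty_iff_eq_empty] at hempty
  have key : ∀ A B : Finset ℕ, A ⊆ Finset.Icc 1 (t + 1) → B ⊆ Finset.Icc 1 (t + 1) →
      A.card = t → B.card = t → A ∪ T ∈ 𝓕 → B ∪ T' ∈ 𝓕 → A = B := by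
    intro A B hA hB hAc hBc hAF hBF
    have hsubAB : (A ∪ T) ∩ (B ∪ T') ⊆ A ∩ B := by
      intro x hx
      simp only [Finset.mem_inter, Finset.mem_union] at hx ⊢
      obtain ⟨h1 | h1, h2 | h2⟩ := hx
      · exact ⟨h1, h2⟩
      · have := Finset.mem_Icc.mp (hA h1)
        have := Finset.mem_Icc.mp (hT'sub h2)
        omega
      · have := Finset.mem_Icc.mp (hB h2)
        have := Finset.mem_Icc.mp (hTsub h1)
        omega
      · have : x ∈ T ∩ T' := Finset.mem_inter.mpr ⟨h1, h2⟩
        rw [hempty] at this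
        exact absurd this (Finset.notMem_empty x)
    have hle : t ≤ (A ∩ B).card :=
      le_trans (hint _ hAF _ hBF) (Finset.card_le_card hsubAB)
    have hAB : A ∩ B = A := Finset.eq_of_subset_of_card_le Finset.inter_subset_left
      (by omega)
    have hsubA : A ⊆ B := by rw [← hAB]; exact Finset.inter_subset_right
    exact Finset.eq_of_subset_of_card_le hsubA (by omega)
  have e1 : G = H := key G H hG hH hGc hHc hGF hHF
  have e2 : G = H' := key G H' hG hH' hGc hH'c hGF hH'F
  exact hHne (e1 ▸ e2)
end

section
/- Let F be a shifted t-intersecting family of k-subsets of [n]. If B = {F' ∩ [2k−t] : F' ∈ F} contains a set of size exactly t, then F is a t-star: there is a t-set contained in every member of F. (In the shifted case, that t-set is [t].) -/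
open Finset

theorem base_size_t_implies_star (n k t : ℕ) (𝓕 : Finset (Finset ℕ))
    (ht : 1 ≤ t) (htk : t < k) (hkn : k < n)
    (hsub : ∀ F ∈ 𝓕, F ⊆ Finset.Icc 1 n)
    (hcard : ∀ F ∈ 𝓕, F.card = k)
    (hint : ∀ F ∈ 𝓕, ∀ F' ∈ 𝓕, t ≤ (F ∩ F').card)
    (hshift : IsShifted n 𝓕)
    (hbase : ∃ F ∈ 𝓕, (F ∩ Finset.Icc 1 (2 * k - t)).card = t) :
    ∃ C : Finset ℕ, C.card = t ∧ ∀ F ∈ 𝓕, C ⊆ F := by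
  set I : Finset ℕ := Finset.Icc 1 (2 * k - t) with hI
  -- Key lemma : the base is t-intersecting
  have key : ∀ m : ℕ, ∀ F ∈ 𝓕, ∀ F' ∈ 𝓕, ((F ∩ F') \ I).card ≤ m →
      t ≤ ((F ∩ F') ∩ I).card := by
    intro m
    induction m with
    | zero =>
      intro F hF F' hF' hm
      have hempty : (F ∩ F') \ I = ∅ := Finset.card_eq_zero.mp (Nat.le_zero.mp hm)
      have : (F ∩ F') ∩ I = F ∩ F' := by
        apply Finset.inter_eq_left.mpr
        intro x hx
        by_contra hxI
        have : x ∈ (F ∩ F') \ I := Finset.mem_sdiff.mpr ⟨hx, hxI⟩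
        simp [hempty] at this
      rw [this]
      exact hint F hF F' hF'
    | succ m ih =>
      intro F hF F' hF' hm
      by_cases h0 : ((F ∩ F') \ I).card ≤ m
      · exact ih F hF F' hF' h0
      · -- pick x ∈ (F ∩ F') \ I
        have hne : ((F ∩ F') \ I).Nonempty := by
          rw [← Finset.card_pos]; omega
        obtain ⟨x, hx⟩ := hne
        have hxFF' : x ∈ F ∩ F' := (Finset.mem_sdiff.mp hx).1
        have hxI : x ∉ I := (Finset.mem_sdiff.mp hx).2
        have hxF : x ∈ F := (Finset.mem_inter.mp hxFF').1
        have hxF' : x ∈ F' := (Finset.mem_inter.mp hxFF').2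
        have hxn : x ∈ Finset.Icc 1 n := hsub F hF hxF
        have hx1 : 1 ≤ x := (Finset.mem_Icc.mp hxn).1
        have hxlarge : 2 * k - t < x := by
          by_contra h
          exact hxI (Finset.mem_Icc.mpr ⟨hx1, by omega⟩)
        -- find a free slot y in I
        have hcardU : (F ∪ F').card + (F ∩ F').card = 2 * k := by
          rw [Finset.card_union_add_card_inter, hcard F hF, hcard F' hF']
          ring
        have hintc : t ≤ (F ∩ F').card := hint F hF F' hF'
        have hUle : (F ∪ F').card ≤ 2 * k - t := by omega
        have hIcard : I.card = 2 * k - t := by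
          rw [hI, Nat.card_Icc]; omega
        have hy : ∃ y ∈ I, y ∉ F ∪ F' := by
          by_contra h
          push_neg at h
          have hsub2 : insert x I ⊆ F ∪ F' := by
            intro z hz
            rcases Finset.mem_insert.mp hz with rfl | hz
            · exact Finset.mem_union_left _ hxF
            · exact h z hz
          have := Finset.card_le_card hsub2
          rw [Finset.card_insert_of_notMem hxI, hIcard] at this
          omega
        obtain ⟨y, hyI, hyU⟩ := hy
        have hyF : y ∉ F := fun h => hyU (Finset.mem_union_left _ h)
        have hyF' : y ∉ F' := fun h => hyU (Finset.mem_union_right _ h)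
        have hy2kt : y ≤ 2 * k - t := (Finset.mem_Icc.mp hyI).2
        have hy1 : 1 ≤ y := (Finset.mem_Icc.mp hyI).1
        have hyx : y < x := by omega
        have hyn : y ∈ Finset.Icc 1 n := by
          have hxle : x ≤ n := (Finset.mem_Icc.mp hxn).2
          exact Finset.mem_Icc.mpr ⟨hy1, by omega⟩
        -- shift x down to y in F'
        have hF'' : insert y (F'.erase x) ∈ 𝓕 :=
          hshift F' hF' y hyn x hxn hyx hxF' hyF'
        set F'' := insert y (F'.erase x) with hF''def
        have hinter : F ∩ F'' = (F ∩ F').erase x := by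
          ext z
          simp only [Finset.mem_inter, Finset.mem_erase, hF''def,
            Finset.mem_insert]
          constructor
          · rintro ⟨hzF, rfl | ⟨hzx, hzF'⟩⟩
            · exact absurd hzF hyF
            · exact ⟨hzx, hzF, hzF'⟩
          · rintro ⟨hzx, hzF, hzF'⟩
            exact ⟨hzF, Or.inr ⟨hzx, hzF'⟩⟩
        have hsd : ((F ∩ F'') \ I).card ≤ m := by
          rw [hinter]
          have : ((F ∩ F').erase x) \ I = ((F ∩ F') \ I).erase x := by
            ext z
            simp only [Finset.mem_sdiff, Finset.mem_erase]
            tauto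
          rw [this, Finset.card_erase_of_mem hx]
          omega
        have hIeq : (F ∩ F'') ∩ I = (F ∩ F') ∩ I := by
          rw [hinter]
          ext z
          simp only [Finset.mem_inter, Finset.mem_erase]
          constructor
          · rintro ⟨⟨_, hz⟩, hzI⟩
            exact ⟨hz, hzI⟩
          · rintro ⟨hz, hzI⟩
            refine ⟨⟨?_, hz⟩, hzI⟩
            rintro rfl
            exact hxI hzI
        have := ih F hF F'' hF'' hsd
        rwa [hIeq] at this
  -- now conclude
  obtain ⟨F₀, hF₀, hF₀card⟩ := hbase
  refine ⟨F₀ ∩ I, hF₀card, ?_⟩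
  intro F hF
  have hkey : t ≤ ((F ∩ F₀) ∩ I).card :=
    key ((F ∩ F₀) \ I).card F hF F₀ hF₀ le_rfl
  have hsub2 : (F ∩ F₀) ∩ I ⊆ F₀ ∩ I := by
    intro z hz
    simp only [Finset.mem_inter] at hz ⊢
    exact ⟨hz.1.2, hz.2⟩
  have heq : (F ∩ F₀) ∩ I = F₀ ∩ I := by
    apply Finset.eq_of_subset_of_card_le hsub2
    omega
  intro z hz
  rw [← heq] at hz
  exact (Finset.mem_inter.mp (Finset.mem_inter.mp hz).1).1
end

section
/- Let B be a t-intersecting family of ℓ-subsets of [2k−t] with t ≤ ℓ ≤ k. Then |B| ≤ C(2k−t, ℓ−t). -/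
open Finset
namespace Katona



/-- Move `y` to `x` in `B` if possible. -/
def mv (x y : ℕ) (B : Finset ℕ) : Finset ℕ :=
  if y ∈ B ∧ x ∉ B then insert x (B.erase y) else B

/-- The (x,y)-compression of a family. -/
def CMP (x y : ℕ) (𝓑 : Finset (Finset ℕ)) : Finset (Finset ℕ) :=
  𝓑.filter (fun B => mv x y B ∈ 𝓑) ∪ (𝓑.filter (fun B => mv x y B ∉ 𝓑)).image (mv x y)

lemma mv_card {x y : ℕ} (B : Finset ℕ) : (mv x y B).card = B.card := by
  unfold mv
  split_ifs with h
  · obtain ⟨hy, hx⟩ := h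
    rw [card_insert_of_notMem (fun hc => hx (mem_erase.1 hc).2), card_erase_of_mem hy]
    have : 1 ≤ B.card := card_pos.2 ⟨y, hy⟩
    omega
  · rfl

lemma mv_subset {x y : ℕ} {B S : Finset ℕ} (hB : B ⊆ S) (hx : x ∈ S) : mv x y B ⊆ S := by
  unfold mv
  split_ifs with h
  · exact insert_subset hx ((erase_subset _ _).trans hB)
  · exact hB

lemma mv_idem (x y : ℕ) (hxy : x ≠ y) (B : Finset ℕ) : mv x y (mv x y B) = mv x y B := by
  by_cases h : y ∈ B ∧ x ∉ B
  · have h1 : mv x y B = insert x (B.erase y) := by unfold mv; rw [if_pos h]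
    rw [h1]
    have : ¬ (y ∈ insert x (B.erase y) ∧ x ∉ insert x (B.erase y)) := by
      rintro ⟨hy, -⟩
      rcases mem_insert.1 hy with e | hc
      · exact hxy e.symm
      · exact (mem_erase.1 hc).1 rfl
    unfold mv; rw [if_neg this]
  · have h1 : mv x y B = B := by unfold mv; rw [if_neg h]
    rw [h1, h1]

lemma mv_mem_CMP {x y : ℕ} (hxy : x ≠ y) {𝓑 : Finset (Finset ℕ)} {B : Finset ℕ} (hB : B ∈ 𝓑) :
    mv x y B ∈ CMP x y 𝓑 := by
  by_cases h : mv x y B ∈ 𝓑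
  · exact mem_union_left _ (mem_filter.2 ⟨h, by rw [mv_idem x y hxy]; exact h⟩)
  · exact mem_union_right _ (mem_image.2 ⟨B, mem_filter.2 ⟨hB, h⟩, rfl⟩)

lemma mem_CMP_iff {x y : ℕ} {𝓑 : Finset (Finset ℕ)} {A : Finset ℕ} :
    A ∈ CMP x y 𝓑 ↔ (A ∈ 𝓑 ∧ mv x y A ∈ 𝓑) ∨ ∃ B ∈ 𝓑, mv x y B ∉ 𝓑 ∧ mv x y B = A := by
  simp [CMP, mem_union, mem_filter, mem_image]
  tauto

lemma mv_moved {x y : ℕ} {𝓑 : Finset (Finset ℕ)} {B : Finset ℕ} (hB : B ∈ 𝓑)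
    (hnB : mv x y B ∉ 𝓑) : y ∈ B ∧ x ∉ B ∧ mv x y B = insert x (B.erase y) := by
  by_cases h : y ∈ B ∧ x ∉ B
  · exact ⟨h.1, h.2, by unfold mv; rw [if_pos h]⟩
  · exfalso; apply hnB; unfold mv; rw [if_neg h]; exact hB

lemma mv_inj {x y : ℕ} (hxy : x ≠ y) {A B : Finset ℕ}
    (hA : y ∈ A ∧ x ∉ A) (hB : y ∈ B ∧ x ∉ B)
    (h : insert x (A.erase y) = insert x (B.erase y)) : A = B := by
  have hxA : x ∉ A.erase y := fun hc => hA.2 (mem_erase.1 hc).2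
  have hxB : x ∉ B.erase y := fun hc => hB.2 (mem_erase.1 hc).2
  have h2 : A.erase y = B.erase y := by
    have := congrArg (Finset.erase · x) h
    simpa [erase_insert hxA, erase_insert hxB] using this
  have := congrArg (insert y ·) h2
  simpa [insert_erase hA.1, insert_erase hB.1] using this

lemma CMP_card {x y : ℕ} (hxy : x ≠ y) (𝓑 : Finset (Finset ℕ)) :
    (CMP x y 𝓑).card = 𝓑.card := by
  have hdisj : Disjoint (𝓑.filter (fun B => mv x y B ∈ 𝓑))
      ((𝓑.filter (fun B => mv x y B ∉ 𝓑)).image (mv x y)) := by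
    rw [disjoint_left]
    intro A hA hA'
    obtain ⟨B, hB, rfl⟩ := mem_image.1 hA'
    exact (mem_filter.1 hB).2 (mem_filter.1 hA).1
  have hinj : Set.InjOn (mv x y) (𝓑.filter (fun B => mv x y B ∉ 𝓑)) := by
    intro A hA B hB h
    simp only [coe_filter, Set.mem_setOf_eq] at hA hB
    obtain ⟨hyA, hxA, eA⟩ := mv_moved hA.1 hA.2
    obtain ⟨hyB, hxB, eB⟩ := mv_moved hB.1 hB.2
    exact mv_inj hxy ⟨hyA, hxA⟩ ⟨hyB, hxB⟩ (by rw [← eA, ← eB]; exact h)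
  rw [CMP, card_union_of_disjoint hdisj, card_image_of_injOn hinj,
    card_filter_add_card_filter_not]


variable {x y t : ℕ} {A B : Finset ℕ} {𝓑 : Finset (Finset ℕ)}

lemma inter_mv_right (hxA : x ∉ A) :
    A ∩ insert x (B.erase y) = (A ∩ B).erase y := by
  ext z
  simp only [mem_inter, mem_insert, mem_erase]
  constructor
  · rintro ⟨hzA, h | ⟨hzy, hzB⟩⟩
    · exact absurd (h ▸ hzA) hxA
    · exact ⟨hzy, hzA, hzB⟩
  · rintro ⟨hzy, hzA, hzB⟩
    exact ⟨hzA, Or.inr ⟨hzy, hzB⟩⟩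

lemma inter_mv_both :
    insert x (A.erase y) ∩ insert x (B.erase y) = insert x ((A ∩ B).erase y) := by
  ext z
  simp only [mem_inter, mem_insert, mem_erase]
  tauto

lemma card_erase_inter (hy : y ∈ A ∩ B) : ((A ∩ B).erase y).card + 1 = (A ∩ B).card := by
  rw [card_erase_of_mem hy]
  have : 1 ≤ (A ∩ B).card := card_pos.2 ⟨y, hy⟩
  omega

lemma mixed (hint : ∀ B ∈ 𝓑, ∀ B' ∈ 𝓑, t ≤ (B ∩ B').card)
    (hA : A ∈ 𝓑) (hA' : mv x y A ∈ 𝓑) (hB : B ∈ 𝓑) : t ≤ (A ∩ mv x y B).card := by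
  by_cases hBm : y ∈ B ∧ x ∉ B
  swap
  · have : mv x y B = B := by unfold mv; rw [if_neg hBm]
    rw [this]; exact hint A hA B hB
  have hmvB : mv x y B = insert x (B.erase y) := by unfold mv; rw [if_pos hBm]
  rw [hmvB]
  by_cases hyA : y ∈ A
  · by_cases hxA : x ∈ A
    · -- A ∩ insert x (B.erase y) = insert x ((A∩B).erase y)
      have he : A ∩ insert x (B.erase y) = insert x ((A ∩ B).erase y) := by
        ext z
        simp only [mem_inter, mem_insert, mem_erase]
        constructor
        · rintro ⟨hzA, h | ⟨hzy, hzB⟩⟩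
          · exact Or.inl h
          · exact Or.inr ⟨hzy, hzA, hzB⟩
        · rintro (rfl | ⟨hzy, hzA, hzB⟩)
          · exact ⟨hxA, Or.inl rfl⟩
          · exact ⟨hzA, Or.inr ⟨hzy, hzB⟩⟩
      rw [he, card_insert_of_notMem (fun hc => hBm.2 (mem_inter.1 (mem_erase.1 hc).2).2),
        card_erase_of_mem (mem_inter.2 ⟨hyA, hBm.1⟩)]
      have h1 : 1 ≤ (A ∩ B).card := card_pos.2 ⟨y, mem_inter.2 ⟨hyA, hBm.1⟩⟩
      have := hint A hA B hB
      omega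
    · -- x ∉ A, y ∈ A : use mv A ∈ 𝓑
      have hmvA : mv x y A = insert x (A.erase y) := by
        unfold mv; rw [if_pos ⟨hyA, hxA⟩]
      have h1 : t ≤ (mv x y A ∩ B).card := hint _ hA' B hB
      rw [hmvA, inter_comm, inter_mv_right hBm.2, inter_comm] at h1
      have h2 := card_erase_inter (A := A) (B := B) (mem_inter.2 ⟨hyA, hBm.1⟩)
      rw [inter_mv_right hxA]
      omega
  · -- y ∉ A : A ∩ B ⊆ A ∩ insert x (B.erase y)
    have hsub : A ∩ B ⊆ A ∩ insert x (B.erase y) := by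
      intro z hz
      obtain ⟨hzA, hzB⟩ := mem_inter.1 hz
      exact mem_inter.2 ⟨hzA, mem_insert.2 (Or.inr (mem_erase.2
        ⟨fun e => hyA (e ▸ hzA), hzB⟩))⟩
    exact (hint A hA B hB).trans (card_le_card hsub)

lemma tint_CMP (hint : ∀ B ∈ 𝓑, ∀ B' ∈ 𝓑, t ≤ (B ∩ B').card) :
    ∀ A ∈ CMP x y 𝓑, ∀ B ∈ CMP x y 𝓑, t ≤ (A ∩ B).card := by
  intro A hA B hB
  rw [mem_CMP_iff] at hA hB
  rcases hA with ⟨hA, hA'⟩ | ⟨A₀, hA₀, hnA, rfl⟩ <;>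
    rcases hB with ⟨hB, hB'⟩ | ⟨B₀, hB₀, hnB, rfl⟩
  · exact hint A hA B hB
  · exact mixed hint hA hA' hB₀
  · rw [inter_comm]; exact mixed hint hB hB' hA₀
  · obtain ⟨hyA, hxA, eA⟩ := mv_moved hA₀ hnA
    obtain ⟨hyB, hxB, eB⟩ := mv_moved hB₀ hnB
    rw [eA, eB, inter_mv_both,
      card_insert_of_notMem (fun hc => hxA (mem_inter.1 (mem_erase.1 hc).2).1)]
    have h2 := card_erase_inter (A := A₀) (B := B₀) (mem_inter.2 ⟨hyA, hyB⟩)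
    have := hint A₀ hA₀ B₀ hB₀
    omega


/-- total weight of a family -/
def wt (𝓑 : Finset (Finset ℕ)) : ℕ := ∑ B ∈ 𝓑, ∑ i ∈ B, i

lemma wt_CMP_lt {x y : ℕ} (hxy : x < y) {𝓑 : Finset (Finset ℕ)}
    (hne : CMP x y 𝓑 ≠ 𝓑) : wt (CMP x y 𝓑) < wt 𝓑 := by
  classical
  set K := 𝓑.filter (fun B => mv x y B ∈ 𝓑) with hK
  set M := 𝓑.filter (fun B => mv x y B ∉ 𝓑) with hM
  have hMne : M.Nonempty := by
    rcases M.eq_empty_or_nonempty with he | h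
    · exfalso
      apply hne
      have hKall : K = 𝓑 := by
        rw [hK, filter_eq_self]
        intro B hB
        by_contra hc
        have : B ∈ M := mem_filter.2 ⟨hB, hc⟩
        rw [he] at this
        exact notMem_empty _ this
      rw [CMP, ← hK, ← hM, he, image_empty, union_empty, hKall]
    · exact h
  have hinj : Set.InjOn (mv x y) M := by
    intro A hA B hB h
    simp only [hM, coe_filter, Set.mem_setOf_eq] at hA hB
    obtain ⟨hyA, hxA, eA⟩ := mv_moved hA.1 hA.2
    obtain ⟨hyB, hxB, eB⟩ := mv_moved hB.1 hB.2
    exact mv_inj hxy.ne ⟨hyA, hxA⟩ ⟨hyB, hxB⟩ (by rw [← eA, ← eB]; exact h)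
  have himg : ∑ B ∈ M.image (mv x y), (∑ i ∈ B, i) = ∑ B ∈ M, ∑ i ∈ mv x y B, i :=
    sum_image (fun A hA B hB h => hinj (by exact_mod_cast hA) (by exact_mod_cast hB) h)
  have hstrict : ∑ B ∈ M, (∑ i ∈ mv x y B, i) < ∑ B ∈ M, ∑ i ∈ B, i := by
    apply sum_lt_sum_of_nonempty hMne
    intro B hB
    obtain ⟨hBm, hBn⟩ := mem_filter.1 hB
    obtain ⟨hyB, hxB, eB⟩ := mv_moved hBm hBn
    rw [eB, sum_insert (fun hc => hxB (mem_erase.1 hc).2)]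
    have hsum : (∑ i ∈ B.erase y, i) + y = ∑ i ∈ B, i := sum_erase_add B _ hyB
    omega
  have hdisj : Disjoint K (M.image (mv x y)) := by
    rw [disjoint_left]
    intro A hA hA'
    obtain ⟨B, hB, rfl⟩ := mem_image.1 hA'
    exact (mem_filter.1 hB).2 (mem_filter.1 hA).1
  calc wt (CMP x y 𝓑) = ∑ B ∈ K, (∑ i ∈ B, i) + ∑ B ∈ M.image (mv x y), ∑ i ∈ B, i := by
        rw [wt, CMP, ← hK, ← hM, sum_union hdisj]
    _ < ∑ B ∈ K, (∑ i ∈ B, i) + ∑ B ∈ M, ∑ i ∈ B, i := by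
        rw [himg]; omega
    _ = wt 𝓑 := by rw [wt, hK, hM, sum_filter_add_sum_filter_not]

lemma exists_compressed (n t ℓ : ℕ) :
    ∀ N (𝓑 : Finset (Finset ℕ)), wt 𝓑 ≤ N →
    (∀ B ∈ 𝓑, B ⊆ Icc 1 n) → (∀ B ∈ 𝓑, B.card = ℓ) →
    (∀ B ∈ 𝓑, ∀ B' ∈ 𝓑, t ≤ (B ∩ B').card) →
    ∃ 𝓑' : Finset (Finset ℕ), 𝓑'.card = 𝓑.card ∧ (∀ B ∈ 𝓑', B ⊆ Icc 1 n) ∧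
      (∀ B ∈ 𝓑', B.card = ℓ) ∧ (∀ B ∈ 𝓑', ∀ B' ∈ 𝓑', t ≤ (B ∩ B').card) ∧
      ∀ x ∈ Icc 1 (n - 1), CMP x n 𝓑' = 𝓑' := by
  intro N
  induction N with
  | zero =>
    intro 𝓑 hwt hsub hcard hint
    by_cases hfix : ∀ x ∈ Icc 1 (n - 1), CMP x n 𝓑 = 𝓑
    · exact ⟨𝓑, rfl, hsub, hcard, hint, hfix⟩
    · push_neg at hfix
      obtain ⟨x, hx, hne⟩ := hfix
      obtain ⟨hx1, hx2⟩ := mem_Icc.1 hx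
      have hxn : x < n := by omega
      have := wt_CMP_lt hxn hne
      omega
  | succ N ih =>
    intro 𝓑 hwt hsub hcard hint
    by_cases hfix : ∀ x ∈ Icc 1 (n - 1), CMP x n 𝓑 = 𝓑
    · exact ⟨𝓑, rfl, hsub, hcard, hint, hfix⟩
    · push_neg at hfix
      obtain ⟨x, hx, hne⟩ := hfix
      obtain ⟨hx1, hx2⟩ := mem_Icc.1 hx
      have hxn : x < n := by omega
      have hlt := wt_CMP_lt hxn hne
      have hxIcc : x ∈ Icc 1 n := mem_Icc.2 ⟨hx1, by omega⟩
      have hsub' : ∀ B ∈ CMP x n 𝓑, B ⊆ Icc 1 n := by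
        intro B hB
        rcases mem_CMP_iff.1 hB with ⟨hB, -⟩ | ⟨B₀, hB₀, -, rfl⟩
        · exact hsub B hB
        · exact mv_subset (hsub B₀ hB₀) hxIcc
      have hcard' : ∀ B ∈ CMP x n 𝓑, B.card = ℓ := by
        intro B hB
        rcases mem_CMP_iff.1 hB with ⟨hB, -⟩ | ⟨B₀, hB₀, -, rfl⟩
        · exact hcard B hB
        · rw [mv_card]; exact hcard B₀ hB₀
      obtain ⟨𝓑', h1, h2, h3, h4, h5⟩ := ih (CMP x n 𝓑) (by omega) hsub' hcard'
        (tint_CMP hint)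
      exact ⟨𝓑', by rw [h1, CMP_card hxn.ne], h2, h3, h4, h5⟩


lemma key_lemma {n t ℓ : ℕ} {𝓑 : Finset (Finset ℕ)}
    (hn : 2 * ℓ + 1 ≤ n + t)
    (hsub : ∀ B ∈ 𝓑, B ⊆ Icc 1 n) (hcard : ∀ B ∈ 𝓑, B.card = ℓ)
    (hint : ∀ B ∈ 𝓑, ∀ B' ∈ 𝓑, t ≤ (B ∩ B').card)
    (hfix : ∀ x ∈ Icc 1 (n - 1), CMP x n 𝓑 = 𝓑) :
    ∀ B ∈ 𝓑, ∀ B' ∈ 𝓑, t ≤ ((B ∩ B').erase n).card := by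
  intro B hB B' hB'
  by_contra hc
  push_neg at hc
  have hint1 := hint B hB B' hB'
  have hecard : ((B ∩ B').erase n).card + 1 = (B ∩ B').card ∧ n ∈ B ∩ B' := by
    by_cases hn' : n ∈ B ∩ B'
    · exact ⟨card_erase_inter hn', hn'⟩
    · rw [erase_eq_of_notMem hn'] at hc; omega
  obtain ⟨hecard, hnBB'⟩ := hecard
  -- |B ∩ B'| = t
  have hBBt : (B ∩ B').card = t := by omega
  -- |B ∪ B'| = 2ℓ - t
  have hunion : (B ∪ B').card + t = 2 * ℓ := by
    have := card_union_add_card_inter B B'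
    rw [hcard B hB, hcard B' hB', hBBt] at this
    omega
  -- find x ∈ Icc 1 (n-1) outside B ∪ B'
  have hxex : (Icc 1 (n - 1) \ (B ∪ B')).Nonempty := by
    rw [sdiff_nonempty]
    intro hcon
    have hIccn : Icc 1 n ⊆ B ∪ B' := by
      intro z hz
      obtain ⟨hz1, hz2⟩ := mem_Icc.1 hz
      by_cases hzn : z = n
      · subst hzn; exact mem_union_left _ (mem_inter.1 hnBB').1
      · exact hcon (mem_Icc.2 ⟨hz1, by omega⟩)
    have h1 : n ≤ (B ∪ B').card := by
      calc n = (Icc 1 n).card := by rw [Nat.card_Icc]; omega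
        _ ≤ (B ∪ B').card := card_le_card hIccn
    omega
  obtain ⟨x, hx⟩ := hxex
  obtain ⟨hxIcc, hxBB'⟩ := mem_sdiff.1 hx
  obtain ⟨hx1, hx2⟩ := mem_Icc.1 hxIcc
  have hxn : x < n := by omega
  have hxB : x ∉ B := fun h => hxBB' (mem_union_left _ h)
  have hxB' : x ∉ B' := fun h => hxBB' (mem_union_right _ h)
  have hnB' : n ∈ B' := (mem_inter.1 hnBB').2
  -- mv x n B' ∈ 𝓑
  have hmv : mv x n B' = insert x (B'.erase n) := by
    unfold mv; rw [if_pos ⟨hnB', hxB'⟩]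
  have hmem : mv x n B' ∈ 𝓑 := by
    rw [← hfix x hxIcc]
    exact mv_mem_CMP hxn.ne hB'
  have hfin : t ≤ (B ∩ mv x n B').card := hint B hB _ hmem
  rw [hmv, inter_mv_right hxB] at hfin
  omega


-- binomial monotonicity on the increasing part
lemma choose_le_of_le_half {n a b : ℕ} (hab : a ≤ b) (hb : 2 * b ≤ n) :
    n.choose a ≤ n.choose b := by
  induction b, hab using Nat.le_induction with
  | base => exact le_rfl
  | succ r har ih =>
    have h1 : 2 * r ≤ n := by omega
    refine (ih h1).trans (Nat.choose_le_succ_of_lt_half_left ?_)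
    omega

lemma trivial_bound {n t ℓ : ℕ} (ht : t ≤ ℓ) (hl : ℓ ≤ n) (hn : n + t ≤ 2 * ℓ) :
    n.choose ℓ ≤ n.choose (ℓ - t) := by
  rw [← Nat.choose_symm hl]
  rcases le_or_gt (2 * (ℓ - t)) n with h | h
  · exact choose_le_of_le_half (by omega) h
  · have hltn : ℓ - t ≤ n := by omega
    rw [← Nat.choose_symm hltn]
    exact choose_le_of_le_half (by omega) (by omega)

theorem general : ∀ n t ℓ : ℕ, ∀ 𝓑 : Finset (Finset ℕ), 1 ≤ t → t ≤ ℓ →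
    (∀ B ∈ 𝓑, B ⊆ Icc 1 n) → (∀ B ∈ 𝓑, B.card = ℓ) →
    (∀ B ∈ 𝓑, ∀ B' ∈ 𝓑, t ≤ (B ∩ B').card) →
    𝓑.card ≤ n.choose (ℓ - t) := by
  intro n
  induction n with
  | zero =>
    intro t ℓ 𝓑 ht htl hsub hcard hint
    rcases 𝓑.eq_empty_or_nonempty with rfl | ⟨B, hB⟩
    · simp
    · have h1 : B ⊆ Icc 1 0 := hsub B hB
      have h2 : B.card = ℓ := hcard B hB
      have h3 : B.card ≤ (Icc 1 0).card := card_le_card h1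
      rw [Nat.card_Icc] at h3
      omega
  | succ n ih =>
    intro t ℓ 𝓑 ht htl hsub hcard hint
    set m := n + 1 with hm
    by_cases htriv : m + t ≤ 2 * ℓ
    · -- trivial case: |𝓑| ≤ C(m, ℓ) ≤ C(m, ℓ - t)
      rcases 𝓑.eq_empty_or_nonempty with rfl | ⟨B, hB⟩
      · simp
      · have hlm : ℓ ≤ m := by
          have h3 : B.card ≤ (Icc 1 m).card := card_le_card (hsub B hB)
          rw [Nat.card_Icc] at h3
          rw [← hcard B hB]
          omega
        have h1 : 𝓑 ⊆ powersetCard ℓ (Icc 1 m) := by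
          intro B hB
          exact mem_powersetCard.2 ⟨hsub B hB, hcard B hB⟩
        calc 𝓑.card ≤ (powersetCard ℓ (Icc 1 m)).card := card_le_card h1
          _ = m.choose ℓ := by rw [card_powersetCard, Nat.card_Icc]; norm_num
          _ ≤ m.choose (ℓ - t) := trivial_bound htl hlm htriv
    · push_neg at htriv
      have hn2 : 2 * ℓ + 1 ≤ m + t := htriv
      by_cases hlt : ℓ = t
      · -- all sets equal
        subst hlt
        have h1 : 𝓑.card ≤ 1 := by
          apply card_le_one.2
          intro B hB B' hB'
          have e1 : B ∩ B' = B := by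
            apply eq_of_subset_of_card_le inter_subset_left
            rw [hcard B hB]
            exact hint B hB B' hB'
          have e2 : B' ∩ B = B' := by
            apply eq_of_subset_of_card_le inter_subset_left
            rw [hcard B' hB']
            exact hint B' hB' B hB
          exact subset_antisymm (e1 ▸ inter_subset_right) (e2 ▸ inter_subset_right)
        simpa using h1
      · have htl1 : t + 1 ≤ ℓ := by omega
        obtain ⟨𝓑', hcard', hsub', hcard'', hint', hfix⟩ :=
          exists_compressed m t ℓ (wt 𝓑) 𝓑 le_rfl hsub hcard hint
        have hkey := key_lemma hn2 hsub' hcard'' hint' hfix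
        -- split according to membership of m
        set 𝓑₀ := 𝓑'.filter (fun B => m ∉ B) with h𝓑₀
        set 𝓑₁ := (𝓑'.filter (fun B => m ∈ B)).image (fun B => B.erase m) with h𝓑₁
        have hc1 : 𝓑₁.card = (𝓑'.filter (fun B => m ∈ B)).card := by
          apply card_image_of_injOn
          intro A hA B hB h
          simp only [coe_filter, Set.mem_setOf_eq] at hA hB
          have := congrArg (insert m ·) h
          simpa [insert_erase hA.2, insert_erase hB.2] using this
        have hsplit : 𝓑'.card = 𝓑₀.card + 𝓑₁.card := by
          rw [hc1, h𝓑₀, add_comm]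
          exact (card_filter_add_card_filter_not (p := fun B => m ∈ B)).symm
        -- bound 𝓑₀ via ih
        have hb0 : 𝓑₀.card ≤ n.choose (ℓ - t) := by
          apply ih t ℓ 𝓑₀ ht htl
          · intro B hB
            obtain ⟨hB1, hB2⟩ := mem_filter.1 hB
            intro z hz
            have := mem_Icc.1 (hsub' B hB1 hz)
            exact mem_Icc.2 ⟨this.1, by
              have : z ≠ m := fun e => hB2 (e ▸ hz)
              omega⟩
          · intro B hB
            exact hcard'' B (mem_filter.1 hB).1
          · intro B hB B' hB'
            exact hint' B (mem_filter.1 hB).1 B' (mem_filter.1 hB').1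
        -- bound 𝓑₁ via ih
        have hb1 : 𝓑₁.card ≤ n.choose (ℓ - 1 - t) := by
          apply ih t (ℓ - 1) 𝓑₁ ht (by omega)
          · intro A hA
            obtain ⟨B, hB, rfl⟩ := mem_image.1 hA
            obtain ⟨hB1, hB2⟩ := mem_filter.1 hB
            intro z hz
            obtain ⟨hz1, hz2⟩ := mem_erase.1 hz
            have := mem_Icc.1 (hsub' B hB1 hz2)
            exact mem_Icc.2 ⟨this.1, by omega⟩
          · intro A hA
            obtain ⟨B, hB, rfl⟩ := mem_image.1 hA
            obtain ⟨hB1, hB2⟩ := mem_filter.1 hB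
            rw [card_erase_of_mem hB2, hcard'' B hB1]
          · intro A hA A' hA'
            obtain ⟨B, hB, rfl⟩ := mem_image.1 hA
            obtain ⟨B', hB', rfl⟩ := mem_image.1 hA'
            obtain ⟨hB1, hB2⟩ := mem_filter.1 hB
            obtain ⟨hB1', hB2'⟩ := mem_filter.1 hB'
            have he : B.erase m ∩ B'.erase m = (B ∩ B').erase m := by
              ext z
              simp only [mem_inter, mem_erase]
              tauto
            rw [he]
            exact hkey B hB1 B' hB1'
        -- combine with Pascal
        have hpascal : n.choose (ℓ - t - 1) + n.choose (ℓ - t) = m.choose (ℓ - t) := by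
          obtain ⟨r, hr⟩ : ∃ r, ℓ - t = r + 1 := ⟨ℓ - t - 1, by omega⟩
          rw [hr, Nat.add_sub_cancel, hm, Nat.choose_succ_succ']
        rw [show ℓ - 1 - t = ℓ - t - 1 by omega] at hb1
        rw [← hcard', hsplit]
        omega



end Katona

theorem base_layer_bound (k t ℓ : ℕ) (𝓑 : Finset (Finset ℕ))
    (ht : 1 ≤ t) (htl : t ≤ ℓ) (hlk : ℓ ≤ k)
    (hsub : ∀ B ∈ 𝓑, B ⊆ Finset.Icc 1 (2 * k - t))
    (hcard : ∀ B ∈ 𝓑, B.card = ℓ)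
    (hint : ∀ B ∈ 𝓑, ∀ B' ∈ 𝓑, t ≤ (B ∩ B').card) :
    𝓑.card ≤ (2 * k - t).choose (ℓ - t) :=
  Katona.general (2 * k - t) t ℓ 𝓑 ht htl hsub hcard hint
end

section
/- Let F be a shifted t-intersecting family of k-subsets of [n] whose base B = {F' ∩ [2k−t] : F' ∈ F} satisfies: B contains the three sets [t]∪{t+1}, [t]∪{t+2}, [t]∪{t+3} among its (t+1)-element members and does not contain [t+2]\{t}. Then every (t+1)-element member of B contains [t]. -/
open Finset

/-- The base of a shifted t-intersecting family is t-intersecting. -/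
lemma base_t_intersecting (n k t : ℕ) (𝓕 : Finset (Finset ℕ))
    (hsub : ∀ F ∈ 𝓕, F ⊆ Finset.Icc 1 n)
    (hcard : ∀ F ∈ 𝓕, F.card = k)
    (hint : ∀ F ∈ 𝓕, ∀ F' ∈ 𝓕, t ≤ (F ∩ F').card)
    (hshift : IsShifted n 𝓕) :
    ∀ s : ℕ, ∀ F' ∈ 𝓕, (F' \ Finset.Icc 1 (2*k-t)).card = s →
      ∀ F ∈ 𝓕, t ≤ (F ∩ F' ∩ Finset.Icc 1 (2*k-t)).card := by
  intro s
  induction s using Nat.strong_induction_on with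
  | _ s ih =>
    intro F' hF' hs F hF
    rcases Nat.eq_zero_or_pos s with h0 | hpos
    · subst h0
      have hsub' : F' ⊆ Finset.Icc 1 (2*k-t) := by
        intro x hx
        by_contra hx'
        have hmem : x ∈ F' \ Finset.Icc 1 (2*k-t) := Finset.mem_sdiff.mpr ⟨hx, hx'⟩
        rw [Finset.card_eq_zero.mp hs] at hmem
        exact absurd hmem (Finset.notMem_empty x)
      have heq : F ∩ F' ∩ Finset.Icc 1 (2*k-t) = F ∩ F' :=
        Finset.inter_eq_left.mpr ((Finset.inter_subset_right).trans hsub')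
      rw [heq]; exact hint F hF F' hF'
    · obtain ⟨j, hj⟩ := Finset.card_pos.mp (hs ▸ hpos)
      obtain ⟨hjF', hjIcc⟩ := Finset.mem_sdiff.mp hj
      have hj1 : 1 ≤ j := (Finset.mem_Icc.mp (hsub F' hF' hjF')).1
      have hjn : j ≤ n := (Finset.mem_Icc.mp (hsub F' hF' hjF')).2
      have hjgt : 2*k - t < j := by
        by_contra h
        exact hjIcc (Finset.mem_Icc.mpr ⟨hj1, Nat.le_of_not_lt h⟩)
      -- find a free spot i ∈ [2k-t] outside F ∪ F'
      have hcardU : (F ∪ F').card ≤ 2*k - t := by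
        have h0 := Finset.card_union_add_card_inter F F'
        have h1 := hint F hF F' hF'
        have h2 := hcard F hF
        have h3 := hcard F' hF'
        omega
      have hsubU : ((F ∪ F') ∩ Finset.Icc 1 (2*k-t)).card < 2*k - t := by
        have hpart : ((F ∪ F') ∩ Finset.Icc 1 (2*k-t)).card
            + ((F ∪ F') \ Finset.Icc 1 (2*k-t)).card = (F ∪ F').card :=
          Finset.card_inter_add_card_sdiff _ _
        have hpos' : 0 < ((F ∪ F') \ Finset.Icc 1 (2*k-t)).card :=
          Finset.card_pos.mpr
            ⟨j, Finset.mem_sdiff.mpr ⟨Finset.mem_union_right _ hjF', hjIcc⟩⟩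
        omega
      have hnsub : ¬ (Finset.Icc 1 (2*k-t) ⊆ F ∪ F') := by
        intro hss
        have hle : (Finset.Icc 1 (2*k-t)).card ≤ ((F ∪ F') ∩ Finset.Icc 1 (2*k-t)).card :=
          Finset.card_le_card (fun x hx => Finset.mem_inter.mpr ⟨hss hx, hx⟩)
        rw [Nat.card_Icc] at hle
        omega
      obtain ⟨i, hiIcc, hiU⟩ := Finset.not_subset.mp hnsub
      obtain ⟨hi1, hi2⟩ := Finset.mem_Icc.mp hiIcc
      have hiF : i ∉ F := fun h => hiU (Finset.mem_union_left _ h)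
      have hiF' : i ∉ F' := fun h => hiU (Finset.mem_union_right _ h)
      have hij : i < j := lt_of_le_of_lt hi2 hjgt
      have hF'' : insert i (F'.erase j) ∈ 𝓕 :=
        hshift F' hF' i (Finset.mem_Icc.mpr ⟨hi1, le_of_lt (lt_of_lt_of_le hij hjn)⟩)
          j (Finset.mem_Icc.mpr ⟨hj1, hjn⟩) hij hjF' hiF'
      have hmeas : ((insert i (F'.erase j)) \ Finset.Icc 1 (2*k-t)).card < s := by
        have hss : (insert i (F'.erase j)) \ Finset.Icc 1 (2*k-t)
            ⊆ (F' \ Finset.Icc 1 (2*k-t)).erase j := by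
          intro x hx
          obtain ⟨hx1, hx2⟩ := Finset.mem_sdiff.mp hx
          rcases Finset.mem_insert.mp hx1 with rfl | hx3
          · exact absurd hiIcc hx2
          · refine Finset.mem_erase.mpr ⟨Finset.ne_of_mem_erase hx3, ?_⟩
            exact Finset.mem_sdiff.mpr ⟨Finset.mem_of_mem_erase hx3, hx2⟩
        have hle := Finset.card_le_card hss
        have hjs : j ∈ F' \ Finset.Icc 1 (2*k-t) := hj
        have := Finset.card_erase_of_mem hjs
        omega
      have hkey := ih _ hmeas _ hF'' rfl F hF
      refine le_trans hkey (Finset.card_le_card ?_)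
      intro x hx
      simp only [Finset.mem_inter] at hx ⊢
      obtain ⟨⟨hx1, hx2⟩, hx3⟩ := hx
      refine ⟨⟨hx1, ?_⟩, hx3⟩
      rcases Finset.mem_insert.mp hx2 with rfl | h
      · exact absurd hx1 hiF
      · exact Finset.mem_of_mem_erase h

theorem base_tplus1_contains_t (n k t : ℕ) (𝓕 : Finset (Finset ℕ))
    (ht : 1 ≤ t) (htk : t < k) (hkn : k < n)
    (hsub : ∀ F ∈ 𝓕, F ⊆ Finset.Icc 1 n)
    (hcard : ∀ F ∈ 𝓕, F.card = k)
    (hint : ∀ F ∈ 𝓕, ∀ F' ∈ 𝓕, t ≤ (F ∩ F').card)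
    (hshift : IsShifted n 𝓕)
    (h1 : insert (t + 1) (Finset.Icc 1 t) ∈ 𝓕.image (· ∩ Finset.Icc 1 (2 * k - t)))
    (h2 : insert (t + 2) (Finset.Icc 1 t) ∈ 𝓕.image (· ∩ Finset.Icc 1 (2 * k - t)))
    (h3 : insert (t + 3) (Finset.Icc 1 t) ∈ 𝓕.image (· ∩ Finset.Icc 1 (2 * k - t)))
    (h4 : (Finset.Icc 1 (t + 2)).erase t ∉ 𝓕.image (· ∩ Finset.Icc 1 (2 * k - t))) :
    ∀ B ∈ 𝓕.image (· ∩ Finset.Icc 1 (2 * k - t)), B.card = t + 1 →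
      Finset.Icc 1 t ⊆ B := by
  intro B hB hBcard
  obtain ⟨F, hF, rfl⟩ := Finset.mem_image.mp hB
  obtain ⟨F1, hF1, hF1e⟩ := Finset.mem_image.mp h1
  obtain ⟨F2, hF2, hF2e⟩ := Finset.mem_image.mp h2
  obtain ⟨F3, hF3, hF3e⟩ := Finset.mem_image.mp h3
  -- key inequalities from the t-intersecting base
  have key : ∀ (G : Finset ℕ), G ∈ 𝓕 →
      t ≤ ((F ∩ Finset.Icc 1 (2*k-t)) ∩ (G ∩ Finset.Icc 1 (2*k-t))).card := by
    intro G hG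
    have h := base_t_intersecting n k t 𝓕 hsub hcard hint hshift
      ((G \ Finset.Icc 1 (2*k-t)).card) G hG rfl F hF
    refine le_trans h (le_of_eq (congrArg Finset.card ?_))
    ext x
    simp only [Finset.mem_inter]
    tauto
  have key1 : t ≤ ((F ∩ Finset.Icc 1 (2*k-t)) ∩ insert (t+1) (Finset.Icc 1 t)).card := by
    have := key F1 hF1; rw [hF1e] at this; simpa using this
  have key2 : t ≤ ((F ∩ Finset.Icc 1 (2*k-t)) ∩ insert (t+2) (Finset.Icc 1 t)).card := by
    have := key F2 hF2; rw [hF2e] at this; simpa using this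
  have key3 : t ≤ ((F ∩ Finset.Icc 1 (2*k-t)) ∩ insert (t+3) (Finset.Icc 1 t)).card := by
    have := key F3 hF3; rw [hF3e] at this; simpa using this
  -- combinatorial step
  set B := F ∩ Finset.Icc 1 (2*k-t) with hBdef
  intro x hx
  by_contra hxB
  set S := B ∩ Finset.Icc 1 t with hSdef
  have hSle : S.card ≤ t - 1 := by
    have hss : S ⊆ (Finset.Icc 1 t).erase x := by
      intro y hy
      obtain ⟨hy1, hy2⟩ := Finset.mem_inter.mp hy
      refine Finset.mem_erase.mpr ⟨?_, hy2⟩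
      rintro rfl; exact hxB hy1
    have := Finset.card_le_card hss
    rw [Finset.card_erase_of_mem hx, Nat.card_Icc] at this
    omega
  have hins : ∀ m : ℕ, t < m →
      t ≤ (B ∩ insert m (Finset.Icc 1 t)).card → m ∈ B := by
    intro m hm hcardm
    by_contra hmB
    have heq : B ∩ insert m (Finset.Icc 1 t) = S := by
      ext y
      simp only [hSdef, Finset.mem_inter, Finset.mem_insert]
      constructor
      · rintro ⟨hy1, rfl | hy2⟩
        · exact absurd hy1 hmB
        · exact ⟨hy1, hy2⟩
      · rintro ⟨hy1, hy2⟩; exact ⟨hy1, Or.inr hy2⟩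
    rw [heq] at hcardm
    omega
  have hm1 : t + 1 ∈ B := hins (t+1) (by omega) key1
  have hm2 : t + 2 ∈ B := hins (t+2) (by omega) key2
  have hm3 : t + 3 ∈ B := hins (t+3) (by omega) key3
  have hSge : t - 1 ≤ S.card := by
    have hss : B ∩ insert (t+1) (Finset.Icc 1 t) ⊆ insert (t+1) S := by
      intro y hy
      obtain ⟨hy1, hy2⟩ := Finset.mem_inter.mp hy
      rcases Finset.mem_insert.mp hy2 with rfl | hy3
      · exact Finset.mem_insert_self _ _
      · exact Finset.mem_insert_of_mem (Finset.mem_inter.mpr ⟨hy1, hy3⟩)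
    have hle := Finset.card_le_card hss
    have hic := Finset.card_insert_le (t+1) S
    omega
  -- now B contains S ∪ {t+1,t+2,t+3}, so |B| ≥ (t-1)+3 = t+2 > t+1
  have hnot : ∀ m : ℕ, t < m → m ∉ S := by
    intro m hm hmS
    have := (Finset.mem_inter.mp hmS).2
    rw [Finset.mem_Icc] at this
    omega
  have hbig : insert (t+1) (insert (t+2) (insert (t+3) S)) ⊆ B := by
    intro y hy
    simp only [Finset.mem_insert] at hy
    rcases hy with rfl | rfl | rfl | hy
    · exact hm1
    · exact hm2
    · exact hm3
    · exact (Finset.mem_inter.mp hy).1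
  have hcard3 : (insert (t+1) (insert (t+2) (insert (t+3) S))).card = S.card + 3 := by
    have e3 : (insert (t+3) S).card = S.card + 1 :=
      Finset.card_insert_of_notMem (hnot _ (by omega))
    have n2 : (t+2) ∉ insert (t+3) S := by
      simp only [Finset.mem_insert]
      push_neg
      exact ⟨by omega, hnot _ (by omega)⟩
    have e2 : (insert (t+2) (insert (t+3) S)).card = S.card + 2 := by
      rw [Finset.card_insert_of_notMem n2, e3]
    have n1 : (t+1) ∉ insert (t+2) (insert (t+3) S) := by
      simp only [Finset.mem_insert]
      push_neg
      exact ⟨by omega, by omega, hnot _ (by omega)⟩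
    rw [Finset.card_insert_of_notMem n1, e2]
  have hfin := Finset.card_le_card hbig
  rw [hcard3, hBcard] at hfin
  omega
end
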